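/- arXiv:1706.07782 — 7 statements merged into one kernel-verified Lean document; each statement's English description precedes it below -/
import Mathlib

section
/- Let p ≥ 2 be an integer. For τ in the upper half-plane ℍ = {τ ∈ ℂ : Im τ > 0}, let τ^{1/p} denote the principal p-th root, i.e. τ^{1/p} = |τ|^{1/p} e^{iθ/p} where θ = Arg τ ∈ (0, π). Then for each j = 0, 1, …, p−1: (i) the map τ ↦ e^{ijπ/p} τ^{1/p} is holomorphic on ℍ and takes values in ℍ, and (ii) for every τ ∈ ℍ one has ∏_{j=0}^{p−1} Im(e^{ijπ/p} τ^{1/p}) = Im(τ) / 2^{p−1}. (This identity expresses that Mok's p-th root map ρ_p(τ) = (τ^{1/p}, e^{iπ/p} τ^{1/p}, …, e^{i(p−1)π/p} τ^{1/p}) is a holomorphic isometry from (ℍ, ds²_ℍ) into (ℍ^p, ds²_{ℍ^p}).) -/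
/-!
Write `w = τ^{1/p}` and `ε = e^{iπ/p}`. Since `|ε| = 1`, `2i · Im(ε^j w) = ε^{-j} (ε^{2j} w - w̄)`, and
the `ε^{2j}` run through the `p`-th roots of unity, so the product of these factors collapses to a
multiple of `w̄^p - w^p = -2i · Im τ`; the constant is `∏ ε^j = i^{p-1}`. Positivity comes from the
polar form: `e^{ijπ/p} τ^{1/p}` has argument `(jπ + arg τ)/p ∈ (0, π)`.
-/

open Complex Finset Real ComplexConjugate

theorem IsPrimitiveRoot.pow_sub_pow_eq_prod_range_sub_pow_mul {R : Type*} [CommRing R]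
    [IsDomain R] {n : ℕ} (hn : 0 < n) {ζ : R} (hζ : IsPrimitiveRoot ζ n) (x y : R) :
    x ^ n - y ^ n = ∏ j ∈ range n, (x - ζ ^ j * y) := by
  have : NeZero n := ⟨hn.ne'⟩
  rw [hζ.pow_sub_pow_eq_prod_sub_mul x y hn]
  refine (prod_nbij (ζ ^ ·) (fun j _ ↦ ?_) (fun a ha b hb ↦ hζ.pow_inj (by simpa using ha)
    (by simpa using hb)) (fun z hz ↦ ?_) (fun _ _ ↦ rfl)).symm
  · rw [Polynomial.mem_nthRootsFinset hn, ← pow_mul, mul_comm, pow_mul, hζ.pow_eq_one, one_pow]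
  · obtain ⟨i, hi, rfl⟩ := hζ.eq_pow_of_pow_eq_one ((Polynomial.mem_nthRootsFinset hn _).1 hz)
    exact ⟨i, by simpa using hi, rfl⟩

namespace Complex

theorem prod_range_exp_mul_pi_mul_I_div (n : ℕ) :
    ∏ j ∈ range n, exp (j * π * I / n) = I ^ (n - 1) := by
  rcases n with _ | m
  · simp
  have hsum : ∑ j ∈ range (m + 1), (j : ℂ) * π * I / (m + 1 : ℕ) = m * (π / 2 * I) := by
    have hgauss : ((∑ j ∈ range (m + 1), j : ℕ) : ℂ) * 2 = (m + 1) * m := by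
      exact_mod_cast sum_range_id_mul_two (m + 1)
    rw [← sum_div, ← sum_mul, ← sum_mul]
    push_cast at hgauss ⊢
    field_simp
    linear_combination hgauss
  rw [← exp_sum, hsum, exp_nat_mul, exp_pi_div_two_mul_I, Nat.add_sub_cancel]

theorem mul_two_I_mul_im_mul {u : ℂ} (hu : ‖u‖ = 1) (w : ℂ) :
    u * (2 * I * (u * w).im) = u ^ 2 * w - conj w := by
  have hconj : u * conj u = 1 := by rw [mul_conj, normSq_eq_norm_sq, hu]; simp
  have hsub := sub_conj (u * w)
  rw [map_mul] at hsub
  push_cast at hsub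
  linear_combination -u * hsub - conj w * hconj

theorem prod_range_im_exp_mul_pi_mul_I_div_mul {n : ℕ} (hn : 0 < n) (w : ℂ) :
    ∏ j ∈ range n, (exp (j * π * I / n) * w).im = (w ^ n).im / 2 ^ (n - 1) := by
  set ε : ℕ → ℂ := fun j ↦ exp (j * π * I / n) with hε
  have hnorm (j : ℕ) : ‖ε j‖ = 1 := by simp [hε, norm_exp]
  have hsq (j : ℕ) : ε j ^ 2 = exp (2 * π * I / n) ^ j := by
    simp only [hε, ← exp_nat_mul]; ring_nf
  have key : (∏ j ∈ range n, ε j) * ((2 * I) ^ n * ((∏ j ∈ range n, (ε j * w).im : ℝ) : ℂ))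
      = (-1) ^ n * (conj w ^ n - w ^ n) := by
    calc _ = ∏ j ∈ range n, ε j * (2 * I * (ε j * w).im) := by
          rw [ofReal_prod, prod_mul_distrib, prod_mul_distrib, prod_const, card_range]
      _ = ∏ j ∈ range n, (-1) * (conj w - exp (2 * π * I / n) ^ j * w) :=
          prod_congr rfl fun j _ ↦ by rw [mul_two_I_mul_im_mul (hnorm j), hsq]; ring
      _ = _ := by
          rw [prod_mul_distrib, prod_const, card_range,
            ← (isPrimitiveRoot_exp n hn.ne').pow_sub_pow_eq_prod_range_sub_pow_mul hn]
  rw [prod_range_exp_mul_pi_mul_I_div, ← map_pow, ← neg_sub, sub_conj] at key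
  obtain ⟨m, rfl⟩ : ∃ m, n = m + 1 := ⟨n - 1, by omega⟩
  generalize ∏ j ∈ range (m + 1), (ε j * w).im = P at key ⊢
  generalize (w ^ (m + 1)).im = Y at key ⊢
  rw [Nat.add_sub_cancel] at key ⊢
  push_cast at key
  have hI : I ^ m * I ^ m = (-1) ^ m := by rw [← mul_pow, I_mul_I]
  have h : (-1) ^ m * (2 * I) * (P * 2 ^ m - Y : ℂ) = 0 := by
    linear_combination key - 2 ^ (m + 1) * I * P * hI
  rw [eq_div_iff (by positivity)]
  exact_mod_cast sub_eq_zero.1 ((mul_eq_zero.1 h).resolve_left (by simp [I_ne_zero]))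

theorem im_exp_ofReal_mul_I_mul_cpow_ofReal (x y : ℝ) (τ : ℂ) :
    (exp (x * I) * τ ^ (y : ℂ)).im = ‖τ‖ ^ y * Real.sin (x + arg τ * y) := by
  rw [cpow_ofReal, exp_mul_I, ← ofReal_cos, ← ofReal_sin, Real.sin_add]
  simp only [mul_im, add_re, add_im, mul_re, ofReal_re, ofReal_im, I_re, I_im]
  ring

theorem arg_pos_of_im_pos {z : ℂ} (hz : 0 < z.im) : 0 < arg z :=
  (arg_nonneg_iff.2 hz.le).lt_of_ne fun h ↦ hz.ne' (arg_eq_zero_iff.1 h.symm).2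

theorem im_exp_mul_pi_mul_I_div_mul_cpow_inv_pos {n j : ℕ} (hj : j < n) {τ : ℂ}
    (hτ : 0 < τ.im) : 0 < (exp (j * π * I / n) * τ ^ (n⁻¹ : ℂ)).im := by
  have hn : (0 : ℝ) < n := by exact_mod_cast hj.trans_le' (Nat.zero_le j)
  have hjn : (j : ℝ) + 1 ≤ n := by exact_mod_cast hj
  have hτ0 : τ ≠ 0 := fun h ↦ by simp [h] at hτ
  have harg : 0 < arg τ := arg_pos_of_im_pos hτ
  have harg' : arg τ < π := arg_lt_pi_iff.2 (Or.inr hτ.ne')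
  have hpolar : exp (j * π * I / n) * τ ^ (n⁻¹ : ℂ)
      = exp (↑(j * π / n) * I) * τ ^ ((n⁻¹ : ℝ) : ℂ) := by
    push_cast; ring_nf
  rw [hpolar, im_exp_ofReal_mul_I_mul_cpow_ofReal]
  refine mul_pos (Real.rpow_pos_of_pos (norm_pos_iff.2 hτ0) _)
    (Real.sin_pos_of_pos_of_lt_pi (by positivity) ?_)
  rw [← div_eq_mul_inv, ← add_div, div_lt_iff₀ hn]
  nlinarith [Real.pi_pos]

end Complex

/-- Mok's `p`-th root map: each component `τ ↦ e^{ijπ/p} τ^{1/p}` is holomorphic on the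
upper half-plane with values in the upper half-plane, and the product of the imaginary
parts of the components equals `Im τ / 2^(p-1)`, expressing the holomorphic isometry
property of the `p`-th root embedding at the level of potentials. -/
theorem pth_root_embedding_isometry (p : ℕ) (hp : 2 ≤ p) :
    (∀ j < p,
      DifferentiableOn ℂ
        (fun τ : ℂ => Complex.exp ((j : ℂ) * Real.pi * Complex.I / p) * τ ^ ((p : ℂ))⁻¹)
        {τ : ℂ | 0 < τ.im} ∧
      ∀ τ : ℂ, 0 < τ.im →
        0 < (Complex.exp ((j : ℂ) * Real.pi * Complex.I / p) * τ ^ ((p : ℂ))⁻¹).im) ∧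
    ∀ τ : ℂ, 0 < τ.im →
      ∏ j ∈ Finset.range p,
          (Complex.exp ((j : ℂ) * Real.pi * Complex.I / p) * τ ^ ((p : ℂ))⁻¹).im
        = τ.im / 2 ^ (p - 1) := by
  refine ⟨fun j hj ↦ ⟨?_, fun τ ↦ im_exp_mul_pi_mul_I_div_mul_cpow_inv_pos hj⟩, fun τ _ ↦ ?_⟩
  · exact (differentiableOn_id.cpow_const fun τ hτ ↦
      mem_slitPlane_iff.2 (Or.inr hτ.ne')).const_mul _
  · rw [prod_range_im_exp_mul_pi_mul_I_div_mul (by omega), cpow_nat_inv_pow τ (by omega)]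
end

section
/- Let p ≥ 2 be an integer and λ > 0 a real constant. Suppose f = (f¹, …, f^p) : Δ → Δ^p is a holomorphic map with f(0) = 0, every component function f^j is non-constant, and ∏_{j=1}^p (1 − |f^j(w)|²) = (1 − |w|²)^λ for all w ∈ Δ. Then λ is an integer and 1 ≤ λ ≤ p. -/
/-!
Polarizing `∏ⱼ (1 - |fʲ(w)|²) = (1 - |w|²)^λ` gives `∏ⱼ (1 - fʲ(z) f̄ʲ(w)) = (1 - z w)^λ`
with `f̄ʲ(w) = conj (fʲ (conj w))`. Expanding the product over subsets `S` of the components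
writes `(1 - z w)^λ` as a sum of `2ᵖ` products `F_S(z) G_S(w)`. Comparing Taylor
coefficients, the vectors `(F_S⁽ᵐ⁾(0))_S ∈ ℂ^(2ᵖ)` pair with the vectors `(G_S⁽ⁿ⁾(0))_S`
to `δₘₙ m! (-1)ᵐ λ(λ-1)⋯(λ-m+1)`. Unless `λ ∈ ℕ` these never vanish, which would give
infinitely many linearly independent vectors in `ℂ^(2ᵖ)`. The bound `λ ≤ p` follows from
the Schwarz lemma `|fʲ(w)| ≤ |w|`.
-/

open Complex ComplexConjugate Metric Set Filter Topology Polynomial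
open scoped Nat

theorem linearIndependent_of_dotProduct_eq_ite {K ι σ : Type*} [Field K] [Fintype σ]
    [DecidableEq ι] (v w : ι → σ → K) (c : ι → K) (hc : ∀ i, c i ≠ 0)
    (h : ∀ i j, v i ⬝ᵥ w j = if i = j then c i else 0) : LinearIndependent K v := by
  rw [linearIndependent_iff']
  intro s g hg i hi
  have hpair : (∑ j ∈ s, g j • v j) ⬝ᵥ w i = g i * c i := by
    simp only [sum_dotProduct, smul_dotProduct, h, smul_eq_mul, mul_ite, mul_zero,
      Finset.sum_ite_eq', if_pos hi]
  rw [hg, zero_dotProduct] at hpair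
  exact (mul_eq_zero.mp hpair.symm).resolve_right (hc i)

theorem descPochhammer_eval_ne_zero {R : Type*} [Ring R] [NoZeroDivisors R] {a : R}
    (ha : ∀ k : ℕ, a ≠ k) (m : ℕ) : (descPochhammer R m).eval a ≠ 0 := by
  induction m with
  | zero => simpa using fun h => ha 0 (by simpa using eq_zero_of_zero_eq_one h.symm a)
  | succ m ih => rw [descPochhammer_succ_eval]; exact mul_ne_zero ih (sub_ne_zero.mpr (ha m))

theorem Finset.prod_one_sub_mul_eq_sum {ι R : Type*} [Fintype ι] [DecidableEq ι] [CommRing R]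
    (a b : ι → R) :
    ∏ i, (1 - a i * b i) =
      ∑ S : Finset ι, (∏ i ∈ S, a i) * ((-1) ^ S.card * ∏ i ∈ S, b i) := by
  have hsub : ∀ i, 1 - a i * b i = -(a i * b i) + 1 := fun i => by ring
  simp only [hsub, Finset.prod_add, Finset.prod_const_one, mul_one, Finset.powerset_univ,
    Finset.prod_neg, Finset.prod_mul_distrib]
  exact Finset.sum_congr rfl fun S _ => by ring

section IteratedDeriv

variable {𝕜 : Type*} [NontriviallyNormedField 𝕜]

theorem iteratedDeriv_comp_mul_left {F : Type*} [NormedAddCommGroup F] [NormedSpace 𝕜 F]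
    (f : 𝕜 → F) (c x : 𝕜) (n : ℕ) :
    iteratedDeriv n (fun y => f (c * y)) x = c ^ n • iteratedDeriv n f (c * x) := by
  induction n generalizing f with
  | zero => simp
  | succ n ih =>
    have hderiv : deriv (fun y => f (c * y)) = fun y => c • deriv f (c * y) :=
      funext (deriv_comp_mul_left c f)
    rw [iteratedDeriv_succ', iteratedDeriv_succ', hderiv, iteratedDeriv_fun_const_smul_field,
      ih, smul_smul, pow_succ']

theorem sum_iteratedDeriv_mul_iteratedDeriv_eq_ite [CompleteSpace 𝕜] {σ : Type*} [Fintype σ]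
    {F G : σ → 𝕜 → 𝕜} {P : 𝕜 → 𝕜} {U : Set 𝕜} (hU : U ∈ 𝓝 0)
    (hF : ∀ i, AnalyticAt 𝕜 (F i) 0) (hG : ∀ i, AnalyticAt 𝕜 (G i) 0)
    (h : ∀ z ∈ U, ∀ w ∈ U, ∑ i, F i z * G i w = P (z * w)) (m n : ℕ) :
    ∑ i, iteratedDeriv m (F i) 0 * iteratedDeriv n (G i) 0 =
      if m = n then (m ! : 𝕜) * iteratedDeriv m P 0 else 0 := by
  have hz : ∀ w ∈ U, ∑ i, iteratedDeriv m (F i) 0 * G i w = w ^ m * iteratedDeriv m P 0 := by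
    intro w hw
    calc ∑ i, iteratedDeriv m (F i) 0 * G i w
        = iteratedDeriv m (fun z => ∑ i, F i z * G i w) 0 := by
          rw [iteratedDeriv_fun_sum (f := fun i z => F i z * G i w)
            fun i _ => ((hF i).mul analyticAt_const).contDiffAt]
          simp only [iteratedDeriv_mul_const_field]
      _ = iteratedDeriv m (fun z => P (w * z)) 0 :=
          EventuallyEq.iteratedDeriv_eq m <| eventually_of_mem hU fun z hz => by
            simp only [h z hz w hw, mul_comm]
      _ = w ^ m * iteratedDeriv m P 0 := by
          rw [iteratedDeriv_comp_mul_left, mul_zero, smul_eq_mul]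
  calc ∑ i, iteratedDeriv m (F i) 0 * iteratedDeriv n (G i) 0
      = iteratedDeriv n (fun w => ∑ i, iteratedDeriv m (F i) 0 * G i w) 0 := by
        rw [iteratedDeriv_fun_sum (f := fun i w => iteratedDeriv m (F i) 0 * G i w)
          fun i _ => (analyticAt_const.mul (hG i)).contDiffAt]
        simp only [iteratedDeriv_const_mul_field]
    _ = iteratedDeriv n (fun w => w ^ m * iteratedDeriv m P 0) 0 :=
        EventuallyEq.iteratedDeriv_eq n (eventually_of_mem hU hz)
    _ = if m = n then (m ! : 𝕜) * iteratedDeriv m P 0 else 0 := by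
        rw [iteratedDeriv_mul_const_field, iteratedDeriv_fun_pow_zero]
        by_cases hmn : m = n
        · simp [hmn]
        · simp [hmn, Ne.symm hmn]

end IteratedDeriv

theorem iteratedDeriv_one_sub_cpow_zero (a : ℂ) (m : ℕ) :
    iteratedDeriv m (fun u : ℂ => (1 - u) ^ a) 0 =
      (-1) ^ m * (descPochhammer ℂ m).eval a := by
  induction m generalizing a with
  | zero => simp
  | succ m ih =>
    have hslit : ∀ᶠ u in 𝓝 (0 : ℂ), 1 - u ∈ slitPlane :=
      (continuous_const.sub continuous_id).continuousAt.preimage_mem_nhds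
        (isOpen_slitPlane.mem_nhds (by simp))
    have hderiv :
        deriv (fun u : ℂ => (1 - u) ^ a) =ᶠ[𝓝 0] fun u => -a * (1 - u) ^ (a - 1) := by
      filter_upwards [hslit] with u hu
      rw [(((hasDerivAt_id' u).const_sub 1).cpow_const hu).deriv]
      ring
    rw [iteratedDeriv_succ', hderiv.iteratedDeriv_eq m, iteratedDeriv_const_mul_field, ih,
      descPochhammer_succ_left, eval_mul, eval_X, eval_comp, eval_sub, eval_X, eval_one]
    ring

theorem exists_nat_eq_of_prod_one_sub_mul_eq_cpow {ι : Type*} [Fintype ι] {F G : ι → ℂ → ℂ}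
    {a : ℂ} {U : Set ℂ} (hU : U ∈ 𝓝 0) (hF : ∀ i, AnalyticAt ℂ (F i) 0)
    (hG : ∀ i, AnalyticAt ℂ (G i) 0)
    (h : ∀ z ∈ U, ∀ w ∈ U, ∏ i, (1 - F i z * G i w) = (1 - z * w) ^ a) :
    ∃ k : ℕ, a = k := by
  classical
  by_contra! ha
  let v : ℕ → Finset ι → ℂ := fun m S => iteratedDeriv m (fun z => ∏ i ∈ S, F i z) 0
  let w : ℕ → Finset ι → ℂ := fun n S =>
    iteratedDeriv n (fun z => (-1) ^ S.card * ∏ i ∈ S, G i z) 0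
  have hvw : ∀ m n, v m ⬝ᵥ w n =
      if m = n then (m ! : ℂ) * ((-1) ^ m * (descPochhammer ℂ m).eval a) else 0 := by
    intro m n
    rw [← iteratedDeriv_one_sub_cpow_zero]
    refine sum_iteratedDeriv_mul_iteratedDeriv_eq_ite hU
      (fun S => Finset.analyticAt_fun_prod S fun i _ => hF i)
      (fun S => analyticAt_const.fun_mul (Finset.analyticAt_fun_prod S fun i _ => hG i))
      (fun z hz w hw => ?_) m n
    rw [← h z hz w hw, Finset.prod_one_sub_mul_eq_sum]
  have hli : LinearIndependent ℂ v := linearIndependent_of_dotProduct_eq_ite v w _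
    (fun m => by simp [Nat.factorial_ne_zero, descPochhammer_eval_ne_zero ha m]) hvw
  have := hli.finite
  exact not_finite ℕ

theorem eqOn_zero_of_forall_ofReal_eq_zero {F : Type*} [NormedAddCommGroup F]
    [NormedSpace ℂ F] {g : ℂ → F} {r : ℝ} (hg : AnalyticOnNhd ℂ g (ball 0 r))
    (h : ∀ t : ℝ, |t| < r → g t = 0) :
    EqOn g 0 (ball 0 r) := by
  rcases le_or_gt r 0 with hr | hr
  · simp [ball_eq_empty.mpr hr]
  refine hg.eqOn_zero_of_preconnected_of_frequently_eq_zero (convex_ball 0 r).isPreconnected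
    (mem_ball_self hr) ?_
  have hIoo : Ioo (-r) r ∈ 𝓝 (0 : ℝ) := Ioo_mem_nhds (neg_lt_zero.mpr hr) hr
  have hreal : ∀ᶠ t : ℝ in 𝓝[≠] 0, g t = 0 := eventually_nhdsWithin_of_eventually_nhds <|
    eventually_of_mem hIoo fun t ht => h t (abs_lt.mpr ht)
  have hofReal : Tendsto ((↑) : ℝ → ℂ) (𝓝[≠] 0) (𝓝[≠] 0) := by
    simpa using continuous_ofReal.continuousWithinAt.tendsto_nhdsWithin
      (x := (0 : ℝ)) (fun t ht => by simpa using ht)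
  exact hofReal.frequently hreal.frequently

theorem eqOn_zero_of_eq_zero_conj {F : Type*} [NormedAddCommGroup F] [NormedSpace ℂ F]
    {E : ℂ × ℂ → F} {r : ℝ} (hE : AnalyticOnNhd ℂ E (ball 0 r ×ˢ ball 0 r))
    (h : ∀ z ∈ ball (0 : ℂ) r, E (z, conj z) = 0) : EqOn E 0 (ball 0 r ×ˢ ball 0 r) := by
  rcases le_or_gt r 0 with hr | hr
  · simp [ball_eq_empty.mpr hr]
  -- In the coordinates `z = u + v i`, `w = u - v i`, the set `w = z̄` is `u, v ∈ ℝ`.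
  have hmem : ∀ u v : ℂ, ‖u‖ < r / 2 → ‖v‖ < r / 2 →
      (u + v * I, u - v * I) ∈ ball (0 : ℂ) r ×ˢ ball 0 r := by
    intro u v hu hv
    have huv : ‖u‖ + ‖v * I‖ < r := by rw [norm_mul, norm_I, mul_one]; linarith
    exact ⟨mem_ball_zero_iff.mpr ((norm_add_le _ _).trans_lt huv),
      mem_ball_zero_iff.mpr ((norm_sub_le _ _).trans_lt huv)⟩
  have hreal : ∀ v : ℝ, |v| < r / 2 →
      EqOn (fun u => E (u + v * I, u - v * I)) 0 (ball 0 (r / 2)) := by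
    intro v hv
    refine eqOn_zero_of_forall_ofReal_eq_zero (hE.comp ((analyticOnNhd_id.add
      analyticOnNhd_const).prod (analyticOnNhd_id.sub analyticOnNhd_const)) fun u hu =>
        hmem u v (mem_ball_zero_iff.mp hu) (by simpa using hv)) fun t ht => ?_
    have hz := (hmem t v (by simpa using ht) (by simpa using hv)).1
    simpa [conj_ofReal, sub_eq_add_neg] using h _ hz
  have hsmall : ∀ u ∈ ball (0 : ℂ) (r / 2), ∀ v ∈ ball (0 : ℂ) (r / 2),
      E (u + v * I, u - v * I) = 0 := by
    intro u hu
    exact eqOn_zero_of_forall_ofReal_eq_zero (hE.comp ((analyticOnNhd_const.add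
      (analyticOnNhd_id.mul analyticOnNhd_const)).prod (analyticOnNhd_const.sub
        (analyticOnNhd_id.mul analyticOnNhd_const))) fun v hv =>
          hmem u v (mem_ball_zero_iff.mp hu) (mem_ball_zero_iff.mp hv))
      fun t ht => hreal t ht hu
  have hnhds : E =ᶠ[𝓝 0] 0 := by
    refine eventually_of_mem (prod_mem_nhds (ball_mem_nhds 0 (half_pos hr))
      (ball_mem_nhds 0 (half_pos hr))) fun ⟨z, w⟩ ⟨hz, hw⟩ => ?_
    rw [mem_ball_zero_iff] at hz hw
    have hu : ‖(z + w) / 2‖ < r / 2 := by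
      rw [norm_div, Complex.norm_two]; linarith [norm_add_le z w]
    have hv : ‖(w - z) * I / 2‖ < r / 2 := by
      rw [norm_div, norm_mul, norm_I, mul_one, Complex.norm_two]; linarith [norm_sub_le w z]
    have hz' : (z + w) / 2 + (w - z) * I / 2 * I = z := by
      linear_combination (w - z) / 2 * I_mul_I
    have hw' : (z + w) / 2 - (w - z) * I / 2 * I = w := by
      linear_combination -(w - z) / 2 * I_mul_I
    simpa [hz', hw'] using hsmall _ (mem_ball_zero_iff.mpr hu) _ (mem_ball_zero_iff.mpr hv)
  exact hE.eqOn_zero_of_preconnected_of_eventuallyEq_zero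
    ((convex_ball 0 r).prod (convex_ball 0 r)).isPreconnected
    ⟨mem_ball_self hr, mem_ball_self hr⟩ hnhds

theorem AnalyticOnNhd.conj_comp_conj {f : ℂ → ℂ} {r : ℝ} (hf : AnalyticOnNhd ℂ f (ball 0 r)) :
    AnalyticOnNhd ℂ (conj ∘ f ∘ conj) (ball 0 r) := by
  refine DifferentiableOn.analyticOnNhd (fun z hz => ?_) isOpen_ball
  have hz' : conj z ∈ ball (0 : ℂ) r := by simpa using hz
  simpa using ((hf _ hz').differentiableAt.conj_conj).differentiableWithinAt

theorem prod_one_sub_mul_conj_comp_conj_eq_cpow {ι : Type*} [Fintype ι] {f : ι → ℂ → ℂ}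
    {lam : ℝ} (hf : ∀ i, AnalyticOnNhd ℂ (f i) (ball 0 1))
    (hiso : ∀ w ∈ ball (0 : ℂ) 1, ∏ i, (1 - ‖f i w‖ ^ 2) = (1 - ‖w‖ ^ 2) ^ lam) :
    ∀ z ∈ ball (0 : ℂ) 1, ∀ w ∈ ball (0 : ℂ) 1,
      ∏ i, (1 - f i z * (conj ∘ f i ∘ conj) w) = (1 - z * w) ^ (lam : ℂ) := by
  let E : ℂ × ℂ → ℂ := fun x =>
    ∏ i, (1 - f i x.1 * (conj ∘ f i ∘ conj) x.2) - (1 - x.1 * x.2) ^ (lam : ℂ)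
  have hE : AnalyticOnNhd ℂ E (ball 0 1 ×ˢ ball 0 1) := by
    refine (Finset.analyticOnNhd_fun_prod _ fun i _ => analyticOnNhd_const.sub
      (((hf i).comp analyticOnNhd_fst fun x hx => hx.1).mul
        ((hf i).conj_comp_conj.comp analyticOnNhd_snd fun x hx => hx.2))).sub
      (analyticOnNhd_const.sub (analyticOnNhd_fst.mul analyticOnNhd_snd) |>.cpow
        analyticOnNhd_const fun x hx => ?_)
    have hx1 : ‖x.1 * x.2‖ < 1 := by
      rw [norm_mul]
      exact mul_lt_one_of_nonneg_of_lt_one_left (norm_nonneg _) (mem_ball_zero_iff.mp hx.1)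
        (mem_ball_zero_iff.mp hx.2).le
    simpa [sub_eq_add_neg] using
      mem_slitPlane_of_norm_lt_one (z := -(x.1 * x.2)) (by simpa using hx1)
  have hdiag : ∀ z ∈ ball (0 : ℂ) 1, E (z, conj z) = 0 := by
    intro z hz
    have hnorm : (0 : ℝ) ≤ 1 - ‖z‖ ^ 2 := by
      nlinarith [mem_ball_zero_iff.mp hz, norm_nonneg z]
    have hprod : ∏ i, (1 - f i z * (conj ∘ f i ∘ conj) (conj z)) =
        ((∏ i, (1 - ‖f i z‖ ^ 2) : ℝ) : ℂ) := by
      push_cast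
      refine Finset.prod_congr rfl fun i _ => ?_
      rw [Function.comp_apply, Function.comp_apply, conj_conj, mul_conj, normSq_eq_norm_sq]
      push_cast
      ring
    have hkernel : (1 : ℂ) - z * conj z = ((1 - ‖z‖ ^ 2 : ℝ) : ℂ) := by
      rw [mul_conj, normSq_eq_norm_sq]
      push_cast
      ring
    show ∏ i, (1 - f i z * (conj ∘ f i ∘ conj) (conj z)) - (1 - z * conj z) ^ (lam : ℂ) = 0
    rw [hprod, hkernel, ← ofReal_cpow hnorm, hiso z hz, sub_self]
  intro z hz w hw
  have hzw : E (z, w) = 0 := eqOn_zero_of_eq_zero_conj hE hdiag ⟨hz, hw⟩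
  exact sub_eq_zero.mp hzw

theorem le_card_of_prod_one_sub_norm_sq_eq_rpow {ι : Type*} [Fintype ι] {f : ι → ℂ → ℂ}
    {lam : ℝ} (hol : ∀ i, DifferentiableOn ℂ (f i) (ball 0 1))
    (hmap : ∀ i, ∀ w ∈ ball (0 : ℂ) 1, ‖f i w‖ < 1) (h0 : ∀ i, f i 0 = 0)
    (hiso : ∀ w ∈ ball (0 : ℂ) 1, ∏ i, (1 - ‖f i w‖ ^ 2) = (1 - ‖w‖ ^ 2) ^ lam) :
    lam ≤ Fintype.card ι := by
  have hschwarz : ∀ i, ‖f i (1 / 2)‖ ≤ 1 / 2 := fun i =>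
    (norm_le_norm_of_mapsTo_ball (hol i)
      (fun w hw => mem_closedBall_zero_iff.mpr (hmap i w hw).le) (h0 i) (by norm_num)).trans_eq
        (by norm_num)
  have hbound : (3 / 4 : ℝ) ^ (Fintype.card ι : ℝ) ≤ (3 / 4) ^ lam :=
    calc (3 / 4 : ℝ) ^ (Fintype.card ι : ℝ) = ∏ _i : ι, (3 / 4 : ℝ) := by
          rw [Real.rpow_natCast, Finset.prod_const, Finset.card_univ]
      _ ≤ ∏ i, (1 - ‖f i (1 / 2)‖ ^ 2) := Finset.prod_le_prod (fun _ _ => by norm_num)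
          fun i _ => by nlinarith [hschwarz i, norm_nonneg (f i (1 / 2))]
      _ = (3 / 4) ^ lam := by rw [hiso _ (by simp; norm_num)]; norm_num
  exact (Real.rpow_le_rpow_left_iff_of_base_lt_one (by norm_num) (by norm_num)).mp hbound

theorem normalizing_constant_is_integer_general (p : ℕ) (lam : ℝ) (hlam : 0 < lam)
    (f : Fin p → ℂ → ℂ)
    (hol : ∀ j, DifferentiableOn ℂ (f j) (Metric.ball 0 1))
    (hmap : ∀ j, ∀ w ∈ Metric.ball (0 : ℂ) 1, ‖f j w‖ < 1)
    (h0 : ∀ j, f j 0 = 0)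
    (hiso : ∀ w ∈ Metric.ball (0 : ℂ) 1,
      ∏ j, (1 - ‖f j w‖ ^ 2) = (1 - ‖w‖ ^ 2) ^ lam) :
    ∃ k : ℕ, 1 ≤ k ∧ k ≤ p ∧ lam = k := by
  have hf : ∀ j, AnalyticOnNhd ℂ (f j) (ball 0 1) := fun j => (hol j).analyticOnNhd isOpen_ball
  obtain ⟨k, hk⟩ := exists_nat_eq_of_prod_one_sub_mul_eq_cpow (ball_mem_nhds 0 one_pos)
    (fun j => hf j 0 (mem_ball_self one_pos))
    (fun j => (hf j).conj_comp_conj 0 (mem_ball_self one_pos))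
    (prod_one_sub_mul_conj_comp_conj_eq_cpow hf hiso)
  have hlam_eq : lam = k := by exact_mod_cast hk
  have hle := le_card_of_prod_one_sub_norm_sq_eq_rpow hol hmap h0 hiso
  rw [Fintype.card_fin, hlam_eq] at hle
  rw [hlam_eq] at hlam
  exact ⟨k, Nat.one_le_iff_ne_zero.mpr (by exact_mod_cast hlam.ne'), by exact_mod_cast hle,
    hlam_eq⟩

/-- If `f = (f¹, …, fᵖ) : Δ → Δᵖ` is holomorphic with `f(0) = 0`, all components
non-constant, and `∏ⱼ (1 - |fʲ(w)|²) = (1 - |w|²)^λ` on `Δ`, then `λ` is an integer with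
`1 ≤ λ ≤ p`. -/
theorem normalizing_constant_is_integer (p : ℕ) (hp : 2 ≤ p) (lam : ℝ) (hlam : 0 < lam)
    (f : Fin p → ℂ → ℂ)
    (hol : ∀ j, DifferentiableOn ℂ (f j) (Metric.ball 0 1))
    (hmap : ∀ j, ∀ w ∈ Metric.ball (0 : ℂ) 1, ‖f j w‖ < 1)
    (h0 : ∀ j, f j 0 = 0)
    (hnc : ∀ j, ∃ w ∈ Metric.ball (0 : ℂ) 1, ∃ w' ∈ Metric.ball (0 : ℂ) 1, f j w ≠ f j w')
    (hiso : ∀ w ∈ Metric.ball (0 : ℂ) 1,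
      ∏ j, (1 - ‖f j w‖ ^ 2) = (1 - ‖w‖ ^ 2) ^ lam) :
    ∃ k : ℕ, 1 ≤ k ∧ k ≤ p ∧ lam = k :=
  normalizing_constant_is_integer_general p lam hlam f hol hmap h0 hiso
end

section
/- Let p ≥ 2 be an integer and f = (f¹, …, f^p) : Δ → Δ^p a holomorphic map with f(0) = 0 such that every component f^j is non-constant and ∏_{j=1}^p (1 − |f^j(w)|²) = (1 − |w|²)^p for all w ∈ Δ. Then for each j there is a complex number c_j with |c_j| = 1 such that f^j(w) = c_j w for all w ∈ Δ; that is, f is the diagonal embedding w ↦ (w, …, w) up to reparametrizations. -/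
/-!
Each factor of `∏ⱼ (1 - |fʲ(w)|²)` is at least `1 - |w|²` by the Schwarz lemma, so the isometry
equation forces `|fʲ(w)| = |w|` everywhere; the equality case of the Schwarz lemma then makes each
`fʲ` a rotation.
-/

open Metric Set Finset

theorem eq_of_forall_le_of_prod_eq_pow {ι R : Type*} [Fintype ι] [CommMonoidWithZero R]
    [PartialOrder R] [ZeroLEOneClass R] [PosMulStrictMono R] [Nontrivial R]
    {a : ι → R} {b : R} (hb : 0 < b) (hle : ∀ i, b ≤ a i)
    (hprod : ∏ i, a i = b ^ Fintype.card ι) (i : ι) : a i = b := by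
  by_contra hne
  have hlt : ∏ _i : ι, b < ∏ i, a i :=
    prod_lt_prod (fun _ _ ↦ hb) (fun i _ ↦ hle i) ⟨i, mem_univ i, (hle i).lt_of_ne' hne⟩
  rw [prod_const, card_univ, hprod] at hlt
  exact lt_irrefl _ hlt

namespace Complex

theorem exists_norm_eq_one_eq_mul_of_norm_apply_eq {g : ℂ → ℂ}
    (hd : DifferentiableOn ℂ g (ball 0 1)) (hmaps : MapsTo g (ball 0 1) (ball 0 1))
    (h0 : g 0 = 0) {z₀ : ℂ} (hz₀ : z₀ ∈ ball (0 : ℂ) 1) (hz₀_ne : z₀ ≠ 0)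
    (heq : ‖g z₀‖ = ‖z₀‖) :
    ∃ c : ℂ, ‖c‖ = 1 ∧ ∀ w ∈ ball (0 : ℂ) 1, g w = c * w := by
  have hslope : ‖dslope g 0 z₀‖ = 1 / 1 := by
    rw [dslope_of_ne _ hz₀_ne, slope_def_field, h0, sub_zero, sub_zero, norm_div, heq,
      div_self (norm_ne_zero_iff.2 hz₀_ne), div_one]
  obtain ⟨c, hc, hg⟩ := affine_of_mapsTo_ball_of_exists_norm_dslope_eq_div' hd
    (by simpa [h0] using hmaps.mono_right ball_subset_closedBall) ⟨z₀, hz₀, hslope⟩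
  refine ⟨c, by simpa using hc, fun w hw ↦ ?_⟩
  simpa [h0, mul_comm] using hg hw

end Complex

theorem maximal_constant_diagonal_general (p : ℕ)
    (f : Fin p → ℂ → ℂ)
    (hol : ∀ j, DifferentiableOn ℂ (f j) (Metric.ball 0 1))
    (hmap : ∀ j, ∀ w ∈ Metric.ball (0 : ℂ) 1, ‖f j w‖ < 1)
    (h0 : ∀ j, f j 0 = 0)
    (hiso : ∀ w ∈ Metric.ball (0 : ℂ) 1,
      ∏ j, (1 - ‖f j w‖ ^ 2) = (1 - ‖w‖ ^ 2) ^ p) :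
    ∀ j, ∃ c : ℂ, ‖c‖ = 1 ∧ ∀ w ∈ Metric.ball (0 : ℂ) 1, f j w = c * w := by
  have hmaps (j) : MapsTo (f j) (ball 0 1) (ball 0 1) :=
    fun w hw ↦ mem_ball_zero_iff.2 (hmap j w hw)
  have hnorm (j) (w) (hw : w ∈ ball (0 : ℂ) 1) : ‖f j w‖ = ‖w‖ := by
    have hw1 : ‖w‖ < 1 := mem_ball_zero_iff.1 hw
    have hschwarz (i) : ‖f i w‖ ≤ ‖w‖ := Complex.norm_le_norm_of_mapsTo_ball (hol i)
      ((hmaps i).mono_right ball_subset_closedBall) (h0 i) hw1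
    have hsq : 1 - ‖f j w‖ ^ 2 = 1 - ‖w‖ ^ 2 :=
      eq_of_forall_le_of_prod_eq_pow (a := fun i ↦ 1 - ‖f i w‖ ^ 2)
        (by nlinarith [norm_nonneg w]) (fun i ↦ by gcongr; exact hschwarz i)
        (by simpa using hiso w hw) j
    exact (pow_left_inj₀ (norm_nonneg _) (norm_nonneg _) two_ne_zero).1 (by linarith)
  intro j
  have hhalf : (1 / 2 : ℂ) ∈ ball (0 : ℂ) 1 := by norm_num [mem_ball_zero_iff]
  exact Complex.exists_norm_eq_one_eq_mul_of_norm_apply_eq (hol j) (hmaps j) (h0 j) hhalf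
    (by norm_num) (hnorm j _ hhalf)

/-- If `f = (f¹, …, fᵖ) : Δ → Δᵖ` is holomorphic with `f(0) = 0`, all components
non-constant, and `∏ⱼ (1 - |fʲ(w)|²) = (1 - |w|²)^p` on `Δ`, then each component is a
rotation `w ↦ cⱼ w` with `|cⱼ| = 1`; i.e. `f` is the diagonal embedding up to
reparametrizations. -/
theorem maximal_constant_diagonal (p : ℕ) (hp : 2 ≤ p)
    (f : Fin p → ℂ → ℂ)
    (hol : ∀ j, DifferentiableOn ℂ (f j) (Metric.ball 0 1))
    (hmap : ∀ j, ∀ w ∈ Metric.ball (0 : ℂ) 1, ‖f j w‖ < 1)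
    (h0 : ∀ j, f j 0 = 0)
    (hnc : ∀ j, ∃ w ∈ Metric.ball (0 : ℂ) 1, ∃ w' ∈ Metric.ball (0 : ℂ) 1, f j w ≠ f j w')
    (hiso : ∀ w ∈ Metric.ball (0 : ℂ) 1,
      ∏ j, (1 - ‖f j w‖ ^ 2) = (1 - ‖w‖ ^ 2) ^ p) :
    ∀ j, ∃ c : ℂ, ‖c‖ = 1 ∧ ∀ w ∈ Metric.ball (0 : ℂ) 1, f j w = c * w :=
  maximal_constant_diagonal_general p f hol hmap h0 hiso
end

section
/- Let p ≥ 1 be an integer and λ₁, …, λ_p > 0 real constants with ∑_{j=1}^p λ_j = 1. Suppose f₁, …, f_p : Δ → Δ are holomorphic functions with f_j(0) = 0 for all j and ∏_{j=1}^p (1 − |f_j(w)|²)^{λ_j} = 1 − |w|² for all w ∈ Δ. Then for each j there is a complex number c_j with |c_j| = 1 such that f_j(w) = c_j w for all w ∈ Δ; i.e., f is the diagonal embedding up to reparametrizations. -/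
/-!
By the Schwarz lemma `‖fⱼ(w)‖ ≤ ‖w‖`, so every factor `1 - ‖fⱼ(w)‖²` is at least `1 - ‖w‖²`.
Since the weights sum to `1`, the weighted geometric mean of these factors can equal
`1 - ‖w‖²` only if all of them do; hence `‖fⱼ(w)‖ = ‖w‖`, and the equality case of the Schwarz
lemma makes each `fⱼ` a rotation.
-/

open Set Metric

theorem Real.eq_of_forall_le_of_prod_rpow_eq {ι : Type*} {s : Finset ι} {w b : ι → ℝ} {a : ℝ}
    (ha : 0 < a) (hw : ∀ i ∈ s, 0 < w i) (hsum : ∑ i ∈ s, w i = 1) (hle : ∀ i ∈ s, a ≤ b i)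
    (hprod : ∏ i ∈ s, b i ^ w i = a) : ∀ i ∈ s, b i = a := by
  intro j hj
  by_contra hne
  have hlt : a < ∏ i ∈ s, b i ^ w i :=
    calc a = ∏ i ∈ s, a ^ w i := by rw [← Real.rpow_sum_of_pos ha, hsum, Real.rpow_one]
      _ < ∏ i ∈ s, b i ^ w i :=
        Finset.prod_lt_prod (fun i _ ↦ Real.rpow_pos_of_pos ha _)
          (fun i hi ↦ Real.rpow_le_rpow ha.le (hle i hi) (hw i hi).le)
          ⟨j, hj, Real.rpow_lt_rpow ha.le (lt_of_le_of_ne (hle j hj) (Ne.symm hne)) (hw j hj)⟩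
  exact hlt.ne' hprod

theorem Complex.exists_norm_eq_one_eqOn_smul_of_norm_apply_eq {E : Type*} [NormedAddCommGroup E]
    [NormedSpace ℂ E] [StrictConvexSpace ℝ E] {f : ℂ → E} {R : ℝ} {z₀ : ℂ}
    (hd : DifferentiableOn ℂ f (ball 0 R)) (h_maps : MapsTo f (ball 0 R) (closedBall 0 R))
    (h₀ : f 0 = 0) (hz₀ : z₀ ∈ ball 0 R) (hz₀_ne : z₀ ≠ 0) (h_eq : ‖f z₀‖ = ‖z₀‖) :
    ∃ c : E, ‖c‖ = 1 ∧ EqOn f (fun z ↦ z • c) (ball 0 R) := by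
  have hR : R ≠ 0 := (pos_of_mem_ball hz₀).ne'
  have h_slope : ‖dslope f 0 z₀‖ = R / R := by
    rw [dslope_of_ne _ hz₀_ne, slope_def_module, h₀, sub_zero, sub_zero, norm_smul, norm_inv,
      h_eq, inv_mul_cancel₀ (norm_ne_zero_iff.2 hz₀_ne), div_self hR]
  obtain ⟨c, hc, hf⟩ := affine_of_mapsTo_ball_of_exists_norm_dslope_eq_div' hd
    (by rwa [h₀]) ⟨z₀, hz₀, h_slope⟩
  refine ⟨c, hc.trans (div_self hR), fun z hz ↦ ?_⟩
  simpa [h₀] using hf hz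

theorem sum_one_implies_diagonal_general (p : ℕ)
    (lam : Fin p → ℝ) (hlam : ∀ j, 0 < lam j) (hsum : ∑ j, lam j = 1)
    (f : Fin p → ℂ → ℂ)
    (hol : ∀ j, DifferentiableOn ℂ (f j) (Metric.ball 0 1))
    (hmap : ∀ j, ∀ w ∈ Metric.ball (0 : ℂ) 1, ‖f j w‖ < 1)
    (h0 : ∀ j, f j 0 = 0)
    (hiso : ∀ w ∈ Metric.ball (0 : ℂ) 1,
      ∏ j, (1 - ‖f j w‖ ^ 2) ^ lam j = 1 - ‖w‖ ^ 2) :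
    ∀ j, ∃ c : ℂ, ‖c‖ = 1 ∧ ∀ w ∈ Metric.ball (0 : ℂ) 1, f j w = c * w := by
  intro j
  have h_maps : ∀ i, MapsTo (f i) (ball 0 1) (closedBall 0 1) := fun i w hw ↦
    mem_closedBall_zero_iff.2 (hmap i w hw).le
  set z₀ : ℂ := 1 / 2
  have hz₀ : z₀ ∈ ball (0 : ℂ) 1 := by norm_num [z₀]
  have hz₀_lt : ‖z₀‖ < 1 := mem_ball_zero_iff.1 hz₀
  have h_schwarz : ∀ i, ‖f i z₀‖ ≤ ‖z₀‖ := fun i ↦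
    Complex.norm_le_norm_of_mapsTo_ball (hol i) (h_maps i) (h0 i) hz₀_lt
  have h_sq : 1 - ‖f j z₀‖ ^ 2 = 1 - ‖z₀‖ ^ 2 :=
    Real.eq_of_forall_le_of_prod_rpow_eq (by nlinarith [norm_nonneg z₀]) (fun i _ ↦ hlam i)
      hsum (fun i _ ↦ by nlinarith [h_schwarz i, norm_nonneg (f i z₀)]) (hiso z₀ hz₀)
      j (Finset.mem_univ j)
  have h_eq : ‖f j z₀‖ = ‖z₀‖ := by
    nlinarith [norm_nonneg (f j z₀), norm_nonneg z₀, h_schwarz j]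
  obtain ⟨c, hc, hf⟩ := Complex.exists_norm_eq_one_eqOn_smul_of_norm_apply_eq (hol j) (h_maps j)
    (h0 j) hz₀ (by norm_num [z₀]) h_eq
  exact ⟨c, hc, fun w hw ↦ (hf hw).trans (mul_comm w c)⟩

/-- If `f₁, …, f_p : Δ → Δ` are holomorphic with `fⱼ(0) = 0`,
`∏ⱼ (1 - |fⱼ(w)|²)^{λⱼ} = 1 - |w|²` on `Δ` for positive reals `λⱼ` with `∑ⱼ λⱼ = 1`,
then each component is a rotation `w ↦ cⱼ w` with `|cⱼ| = 1`; i.e. `f` is the diagonal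
embedding up to reparametrizations. -/
theorem sum_one_implies_diagonal (p : ℕ) (hp : 1 ≤ p)
    (lam : Fin p → ℝ) (hlam : ∀ j, 0 < lam j) (hsum : ∑ j, lam j = 1)
    (f : Fin p → ℂ → ℂ)
    (hol : ∀ j, DifferentiableOn ℂ (f j) (Metric.ball 0 1))
    (hmap : ∀ j, ∀ w ∈ Metric.ball (0 : ℂ) 1, ‖f j w‖ < 1)
    (h0 : ∀ j, f j 0 = 0)
    (hiso : ∀ w ∈ Metric.ball (0 : ℂ) 1,
      ∏ j, (1 - ‖f j w‖ ^ 2) ^ lam j = 1 - ‖w‖ ^ 2) :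
    ∀ j, ∃ c : ℂ, ‖c‖ = 1 ∧ ∀ w ∈ Metric.ball (0 : ℂ) 1, f j w = c * w :=
  sum_one_implies_diagonal_general p lam hlam hsum f hol hmap h0 hiso
end

section
/- Let n ≥ 2 be an integer and f = (f₁, f_{2,1}, …, f_{2,n}) : Δ → ℂ^{n+1} a holomorphic map with |f₁(w)| < 1 and ∑_{j=1}^n |f_{2,j}(w)|² < 1 for all w ∈ Δ. Then the following are equivalent: (a) f(0) = 0 and (1 − |f₁(w)|²)(1 − ∑_{j=1}^n |f_{2,j}(w)|²) = 1 − |w|² for all w ∈ Δ; (b) there exists a unitary matrix U ∈ U(n+1) such that U · (f₁(w), f_{2,1}(w), …, f_{2,n}(w))ᵗ = (w, f₁(w) f_{2,1}(w), …, f₁(w) f_{2,n}(w))ᵗ for all w ∈ Δ. -/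
open Complex Metric Filter Set Topology
open scoped InnerProductSpace ComplexConjugate Matrix

/-!
(b) ⇒ (a): a unitary matrix preserves `∑ |·|²`, and for `F = (f₁, f₂)`, `G = (w, f₁ f₂)` the
identity `∑ |F|² = ∑ |G|²` is the functional equation. At `w = 0` it reads
`(1 - |f₁(0)|²)(1 - ∑ |f_{2,j}(0)|²) = 1`, which with `|f₁(0)| < 1` forces `f(0) = 0`.

(a) ⇒ (b): the functional equation says `∑ |F|² = ∑ |G|²` on the disk. By polarization,
`(w, z) ↦ ⟨F(w), F(z̄)⟩ - ⟨G(w), G(z̄)⟩` is holomorphic in both variables and vanishes on the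
totally real set `{(x̄, x)}`, hence everywhere; so `F` and `G` have the same Gram kernel,
`F(w) ↦ G(w)` extends to a linear isometry of `ℂⁿ⁺¹`, and its matrix is the required `U`.
-/

theorem eqOn_zero_of_eq_zero_on_line {g : ℂ → ℂ} {U : Set ℂ} (hg : DifferentiableOn ℂ g U)
    (hUo : IsOpen U) (hUc : IsPreconnected U) {z₀ d : ℂ} (hz₀ : z₀ ∈ U) (hd : d ≠ 0)
    (h : ∀ s : ℝ, z₀ + s * d ∈ U → g (z₀ + s * d) = 0) : EqOn g 0 U := by
  refine (hg.analyticOnNhd hUo).eqOn_zero_of_preconnected_of_frequently_eq_zero hUc hz₀ ?_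
  set γ : ℝ → ℂ := fun s => z₀ + s * d
  have hγ : Continuous γ := by fun_prop
  have hγ_punctured : Tendsto γ (𝓝[≠] 0) (𝓝[≠] z₀) := by
    refine tendsto_nhdsWithin_of_tendsto_nhds_of_eventually_within _
      ((by simpa [γ] using hγ.tendsto 0 : Tendsto γ (𝓝 0) (𝓝 z₀)).mono_left nhdsWithin_le_nhds)
      (eventually_nhdsWithin_of_forall fun s hs => ?_)
    simpa [γ, hd] using hs
  have hγU : ∀ᶠ s in 𝓝 (0 : ℝ), γ s ∈ U :=
    hγ.continuousAt.preimage_mem_nhds (hUo.mem_nhds (by simpa [γ] using hz₀))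
  exact hγ_punctured.frequently
    ((eventually_nhdsWithin_of_eventually_nhds hγU).mono fun s hs => h s hs).frequently

theorem DifferentiableOn.conj_conj_ball {f : ℂ → ℂ} {r : ℝ}
    (hf : DifferentiableOn ℂ f (ball 0 r)) :
    DifferentiableOn ℂ (conj ∘ f ∘ conj) (ball 0 r) := by
  intro z hz
  have hz' : conj z ∈ ball (0 : ℂ) r := by simpa using hz
  simpa using ((hf.differentiableAt (isOpen_ball.mem_nhds hz')).conj_conj).differentiableWithinAt

theorem sum_mul_eq_zero_of_eq_zero_on_conj {ι : Type*} [Fintype ι] {r : ℝ} {p q : ℂ → ι → ℂ}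
    (hp : DifferentiableOn ℂ p (ball 0 r)) (hq : DifferentiableOn ℂ q (ball 0 r))
    (h : ∀ x ∈ ball (0 : ℂ) r, ∑ i, p (conj x) i * q x i = 0) {z w : ℂ}
    (hz : z ∈ ball 0 r) (hw : w ∈ ball 0 r) : ∑ i, p z i * q w i = 0 := by
  set K : ℂ → ℂ → ℂ := fun z w => ∑ i, p z i * q w i
  have hK : ∀ {a b : ℂ → ℂ} {U : Set ℂ}, DifferentiableOn ℂ a U → DifferentiableOn ℂ b U →
      MapsTo a U (ball 0 r) → MapsTo b U (ball 0 r) →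
      DifferentiableOn ℂ (fun t => K (a t) (b t)) U := fun ha hb hma hmb =>
    DifferentiableOn.fun_sum fun i _ =>
      ((differentiableOn_pi.1 hp i).comp ha hma).mul ((differentiableOn_pi.1 hq i).comp hb hmb)
  -- On the line `t ↦ (t - yI, t + yI)` the points with `t` real are the `(conj x, x)`, so the
  -- identity theorem in `t` makes `K` vanish on the whole line.
  have hK_line : ∀ y : ℝ, |y| < r → ∀ t, -(y * I) + t ∈ ball (0 : ℂ) r →
      y * I + t ∈ ball (0 : ℂ) r → K (-(y * I) + t) (y * I + t) = 0 := by
    intro y hy t ht₁ ht₂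
    have hmem : ∀ t, t ∈ ball (y * I) r ∩ ball (-(y * I)) r ↔
        -(y * I) + t ∈ ball (0 : ℂ) r ∧ y * I + t ∈ ball (0 : ℂ) r := by
      intro t
      simp only [mem_inter_iff, mem_ball_iff_norm, sub_zero, sub_neg_eq_add, neg_add_eq_sub,
        add_comm t]
    refine eqOn_zero_of_eq_zero_on_line (z₀ := 0) (d := 1)
      (hK (by fun_prop) (by fun_prop) (fun t ht => ((hmem t).1 ht).1)
        (fun t ht => ((hmem t).1 ht).2))
      (isOpen_ball.inter isOpen_ball) ((convex_ball _ _).inter (convex_ball _ _)).isPreconnected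
      ?_ one_ne_zero (fun s hs => ?_) ((hmem t).2 ⟨ht₁, ht₂⟩)
    · simpa [hmem] using hy
    · have hx := h (s + y * I) (by simpa [add_comm] using ((hmem _).1 hs).2)
      simpa [K, add_comm, sub_eq_neg_add] using hx
  refine eqOn_zero_of_eq_zero_on_line (hK (differentiableOn_const z) differentiableOn_id
    (fun _ _ => hz) (fun _ hw => hw)) isOpen_ball (convex_ball _ _).isPreconnected hz I_ne_zero
    (fun s hs => ?_) hw
  -- `(z, z + sI)` lies on the line of `y = s / 2`.
  have e₁ : -(((s / 2 : ℝ) : ℂ) * I) + (z + (s / 2 : ℝ) * I) = z := by ring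
  have e₂ : ((s / 2 : ℝ) : ℂ) * I + (z + (s / 2 : ℝ) * I) = z + s * I := by push_cast; ring
  have hs' : |s / 2| < r := by
    have := norm_sub_le (z + s * I) z
    simp only [add_sub_cancel_left, norm_mul, norm_real, norm_I, mul_one, Real.norm_eq_abs] at this
    rw [mem_ball_zero_iff] at hz hs
    rw [abs_div, abs_two]
    linarith
  have := hK_line (s / 2) hs' (z + (s / 2 : ℝ) * I) (by rwa [e₁]) (by rwa [e₂])
  rwa [e₁, e₂] at this

section GramIsometry

variable {𝕜 E ι : Type*} [RCLike 𝕜] [NormedAddCommGroup E] [InnerProductSpace 𝕜 E]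

theorem norm_linearCombination_eq_of_inner_eq {u v : ι → E}
    (h : ∀ a b, ⟪u a, u b⟫_𝕜 = ⟪v a, v b⟫_𝕜) (c : ι →₀ 𝕜) :
    ‖Finsupp.linearCombination 𝕜 u c‖ = ‖Finsupp.linearCombination 𝕜 v c‖ := by
  have hinner : ⟪Finsupp.linearCombination 𝕜 u c, Finsupp.linearCombination 𝕜 u c⟫_𝕜 =
      ⟪Finsupp.linearCombination 𝕜 v c, Finsupp.linearCombination 𝕜 v c⟫_𝕜 := by
    simp only [Finsupp.linearCombination_apply, Finsupp.sum, sum_inner, inner_sum,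
      inner_smul_left, inner_smul_right, h]
  rw [@norm_eq_sqrt_re_inner 𝕜, @norm_eq_sqrt_re_inner 𝕜, hinner]

theorem exists_linearIsometryEquiv_apply_eq_of_inner_eq [FiniteDimensional 𝕜 E] {u v : ι → E}
    (h : ∀ a b, ⟪u a, u b⟫_𝕜 = ⟪v a, v b⟫_𝕜) : ∃ T : E ≃ₗᵢ[𝕜] E, ∀ a, T (u a) = v a := by
  let L := Finsupp.linearCombination 𝕜 u
  let M := Finsupp.linearCombination 𝕜 v
  have hnorm : ∀ c, ‖L c‖ = ‖M c‖ := norm_linearCombination_eq_of_inner_eq h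
  have hker : LinearMap.ker L ≤ LinearMap.ker M := fun c hc => by
    rw [LinearMap.mem_ker, ← norm_eq_zero] at hc ⊢
    rwa [← hnorm]
  let T₀ : LinearMap.range L →ₗ[𝕜] E := (LinearMap.ker L).liftQ M hker ∘ₗ L.quotKerEquivRange.symm
  have hT₀ : ∀ c, T₀ ⟨L c, LinearMap.mem_range_self L c⟩ = M c := fun c => by
    simp only [T₀, LinearMap.comp_apply, LinearEquiv.coe_coe,
      LinearMap.quotKerEquivRange_symm_apply_image, Submodule.mkQ_apply, Submodule.liftQ_apply]
  let T₁ : LinearMap.range L →ₗᵢ[𝕜] E :=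
    ⟨T₀, by rintro ⟨_, c, rfl⟩; rw [hT₀, ← hnorm]; rfl⟩
  refine ⟨T₁.extend.toLinearIsometryEquiv rfl, fun a => ?_⟩
  calc T₁.extend.toLinearIsometryEquiv rfl (u a) = T₁.extend (L (Finsupp.single a 1)) := by
        simp [L]
    _ = T₁ ⟨_, LinearMap.mem_range_self L _⟩ := T₁.extend_apply ⟨_, LinearMap.mem_range_self L _⟩
    _ = M (Finsupp.single a 1) := hT₀ _
    _ = v a := by simp [M]

end GramIsometry

section UnitaryMatrix

variable {𝕜 n : Type*} [RCLike 𝕜] [Fintype n] [DecidableEq n]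

theorem LinearIsometryEquiv.exists_mem_unitaryGroup_mulVec_eq
    (T : EuclideanSpace 𝕜 n ≃ₗᵢ[𝕜] EuclideanSpace 𝕜 n) :
    ∃ U ∈ Matrix.unitaryGroup n 𝕜, ∀ x, U *ᵥ x = (T (WithLp.toLp 2 x)).ofLp :=
  ⟨(Matrix.toEuclideanCLM (n := n) (𝕜 := 𝕜)).symm T.toContinuousLinearEquiv.toContinuousLinearMap,
    Unitary.map_mem _ (Unitary.linearIsometryEquiv.symm T).prop, fun x => by
      rw [← Matrix.ofLp_toEuclideanCLM]; simp⟩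

theorem Matrix.sum_norm_sq_mulVec_of_mem_unitaryGroup {U : Matrix n n 𝕜}
    (hU : U ∈ Matrix.unitaryGroup n 𝕜) (x : n → 𝕜) :
    ∑ i, ‖(U *ᵥ x) i‖ ^ 2 = ∑ i, ‖x i‖ ^ 2 := by
  have := ContinuousLinearMap.norm_map_of_mem_unitary
    (Unitary.map_mem (Matrix.toEuclideanCLM (n := n) (𝕜 := 𝕜)) hU) (WithLp.toLp 2 x)
  calc ∑ i, ‖(U *ᵥ x) i‖ ^ 2
      = ‖Matrix.toEuclideanCLM (n := n) (𝕜 := 𝕜) U (WithLp.toLp 2 x)‖ ^ 2 := by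
        rw [EuclideanSpace.norm_sq_eq]; rfl
    _ = ∑ i, ‖x i‖ ^ 2 := by rw [this, EuclideanSpace.norm_sq_eq]

end UnitaryMatrix

theorem sum_mul_conj_eq_of_sum_norm_sq_eq {ι κ : Type*} [Fintype ι] [Fintype κ] {r : ℝ}
    {u : ℂ → ι → ℂ} {v : ℂ → κ → ℂ} (hu : DifferentiableOn ℂ u (ball 0 r))
    (hv : DifferentiableOn ℂ v (ball 0 r))
    (h : ∀ x ∈ ball (0 : ℂ) r, ∑ i, ‖u x i‖ ^ 2 = ∑ k, ‖v x k‖ ^ 2) {w z : ℂ}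
    (hw : w ∈ ball 0 r) (hz : z ∈ ball 0 r) :
    ∑ i, u w i * conj (u z i) = ∑ k, v w k * conj (v z k) := by
  let p : ℂ → ι ⊕ κ → ℂ := fun x => Sum.elim (u x) (-v x)
  let q : ℂ → ι ⊕ κ → ℂ := fun x =>
    Sum.elim (fun i => conj (u (conj x) i)) (fun k => conj (v (conj x) k))
  have hp : DifferentiableOn ℂ p (ball 0 r) := differentiableOn_pi.2 fun
    | .inl i => differentiableOn_pi.1 hu i
    | .inr k => (differentiableOn_pi.1 hv k).neg
  have hq : DifferentiableOn ℂ q (ball 0 r) := differentiableOn_pi.2 fun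
    | .inl i => (differentiableOn_pi.1 hu i).conj_conj_ball
    | .inr k => (differentiableOn_pi.1 hv k).conj_conj_ball
  have hpq := sum_mul_eq_zero_of_eq_zero_on_conj hp hq (fun x hx => ?_) hw
    (show conj z ∈ ball (0 : ℂ) r by simpa using hz)
  · simpa [p, q, Fintype.sum_sum_type, sub_eq_zero, ← sub_eq_add_neg] using hpq
  · simp only [p, q, Fintype.sum_sum_type, Sum.elim_inl, Sum.elim_inr, Pi.neg_apply,
      neg_mul, Finset.sum_neg_distrib, ← sub_eq_add_neg, sub_eq_zero, RCLike.mul_conj]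
    exact_mod_cast h (conj x) (by simpa using hx)

theorem exists_mem_unitaryGroup_mulVec_eq_of_sum_norm_sq_eq {n : Type*} [Fintype n]
    [DecidableEq n] {r : ℝ} {u v : ℂ → n → ℂ} (hu : DifferentiableOn ℂ u (ball 0 r))
    (hv : DifferentiableOn ℂ v (ball 0 r))
    (h : ∀ x ∈ ball (0 : ℂ) r, ∑ i, ‖u x i‖ ^ 2 = ∑ i, ‖v x i‖ ^ 2) :
    ∃ U ∈ Matrix.unitaryGroup n ℂ, ∀ w ∈ ball (0 : ℂ) r, U *ᵥ u w = v w := by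
  let ue : ball (0 : ℂ) r → EuclideanSpace ℂ n := fun w => WithLp.toLp 2 (u w)
  let ve : ball (0 : ℂ) r → EuclideanSpace ℂ n := fun w => WithLp.toLp 2 (v w)
  obtain ⟨T, hT⟩ := exists_linearIsometryEquiv_apply_eq_of_inner_eq (𝕜 := ℂ) (u := ue) (v := ve)
    fun z w => by
      simpa [ue, ve, PiLp.inner_apply] using
        sum_mul_conj_eq_of_sum_norm_sq_eq hu hv h w.2 z.2
  obtain ⟨U, hU, hUT⟩ := T.exists_mem_unitaryGroup_mulVec_eq
  exact ⟨U, hU, fun w hw => by simpa [hUT] using congrArg WithLp.ofLp (hT ⟨w, hw⟩)⟩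

theorem eq_zero_of_one_sub_mul_one_sub_eq_one {a b : ℝ} (ha₀ : 0 ≤ a) (ha₁ : a ≤ 1)
    (hb : 0 ≤ b) (h : (1 - a) * (1 - b) = 1) : a = 0 ∧ b = 0 := by
  have ha : a = 0 := by nlinarith [mul_nonneg (sub_nonneg.2 ha₁) hb]
  subst ha
  exact ⟨rfl, by linarith⟩

theorem isometry_iff_unitary_general (n : ℕ)
    (f₁ : ℂ → ℂ) (f₂ : Fin n → ℂ → ℂ)
    (hol₁ : DifferentiableOn ℂ f₁ (Metric.ball 0 1))
    (hol₂ : ∀ j, DifferentiableOn ℂ (f₂ j) (Metric.ball 0 1))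
    (hmap₁ : ∀ w ∈ Metric.ball (0 : ℂ) 1, ‖f₁ w‖ < 1) :
    ((f₁ 0 = 0 ∧ (∀ j, f₂ j 0 = 0) ∧
      ∀ w ∈ Metric.ball (0 : ℂ) 1,
        (1 - ‖f₁ w‖ ^ 2) * (1 - ∑ j, ‖f₂ j w‖ ^ 2)
          = 1 - ‖w‖ ^ 2)
    ↔ ∃ U : Matrix (Fin (n + 1)) (Fin (n + 1)) ℂ,
        U ∈ Matrix.unitaryGroup (Fin (n + 1)) ℂ ∧
        ∀ w ∈ Metric.ball (0 : ℂ) 1,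
          U.mulVec (Fin.cons (f₁ w) (fun j => f₂ j w))
            = Fin.cons w (fun j => f₁ w * f₂ j w)) := by
  let F : ℂ → Fin (n + 1) → ℂ := fun w => Fin.cons (f₁ w) fun j => f₂ j w
  let G : ℂ → Fin (n + 1) → ℂ := fun w => Fin.cons w fun j => f₁ w * f₂ j w
  have hF : DifferentiableOn ℂ F (ball 0 1) :=
    differentiableOn_pi.2 fun i => Fin.cases hol₁ hol₂ i
  have hG : DifferentiableOn ℂ G (ball 0 1) :=
    differentiableOn_pi.2 fun i => Fin.cases differentiableOn_id (fun j => hol₁.mul (hol₂ j)) i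
  have hFG : ∀ w, ∑ i, ‖F w i‖ ^ 2 = ∑ i, ‖G w i‖ ^ 2 ↔
      (1 - ‖f₁ w‖ ^ 2) * (1 - ∑ j, ‖f₂ j w‖ ^ 2) = 1 - ‖w‖ ^ 2 := fun w => by
    simp only [F, G, Fin.sum_univ_succ, Fin.cons_zero, Fin.cons_succ, norm_mul, mul_pow,
      ← Finset.mul_sum]
    constructor <;> intro h <;> linarith
  constructor
  · rintro ⟨-, -, h⟩
    exact exists_mem_unitaryGroup_mulVec_eq_of_sum_norm_sq_eq hF hG fun w hw => (hFG w).2 (h w hw)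
  · rintro ⟨U, hU, hUF⟩
    have h : ∀ w ∈ ball (0 : ℂ) 1, (1 - ‖f₁ w‖ ^ 2) * (1 - ∑ j, ‖f₂ j w‖ ^ 2) = 1 - ‖w‖ ^ 2 :=
      fun w hw => (hFG w).1 (by rw [← Matrix.sum_norm_sq_mulVec_of_mem_unitaryGroup hU, hUF w hw])
    have hb : ∀ j ∈ Finset.univ, 0 ≤ ‖f₂ j 0‖ ^ 2 := fun j _ => by positivity
    obtain ⟨hf₁, hf₂⟩ := eq_zero_of_one_sub_mul_one_sub_eq_one (by positivity)
      (pow_le_one₀ (norm_nonneg _) (hmap₁ 0 (mem_ball_self one_pos)).le)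
      (Finset.sum_nonneg hb) (by simpa using h 0 (mem_ball_self one_pos))
    refine ⟨by simpa using hf₁, fun j => ?_, h⟩
    simpa using (Finset.sum_eq_zero_iff_of_nonneg hb).1 hf₂ j (Finset.mem_univ j)

/-- Characterization of normalized holomorphic isometries from `(Δ, g_Δ)` into
`(Δ, g_Δ) × (𝔹ⁿ, g_{𝔹ⁿ})`: the functional equation
`(1 - |f₁|²)(1 - ∑ |f_{2,j}|²) = 1 - |w|²` with `f(0) = 0` holds if and only if there is a
unitary matrix `U ∈ U(n+1)` with
`U (f₁, f_{2,1}, …, f_{2,n})ᵗ = (w, f₁ f_{2,1}, …, f₁ f_{2,n})ᵗ` on `Δ`. -/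
theorem isometry_iff_unitary (n : ℕ) (hn : 2 ≤ n)
    (f₁ : ℂ → ℂ) (f₂ : Fin n → ℂ → ℂ)
    (hol₁ : DifferentiableOn ℂ f₁ (Metric.ball 0 1))
    (hol₂ : ∀ j, DifferentiableOn ℂ (f₂ j) (Metric.ball 0 1))
    (hmap₁ : ∀ w ∈ Metric.ball (0 : ℂ) 1, ‖f₁ w‖ < 1)
    (hmap₂ : ∀ w ∈ Metric.ball (0 : ℂ) 1, ∑ j, ‖f₂ j w‖ ^ 2 < 1) :
    ((f₁ 0 = 0 ∧ (∀ j, f₂ j 0 = 0) ∧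
      ∀ w ∈ Metric.ball (0 : ℂ) 1,
        (1 - ‖f₁ w‖ ^ 2) * (1 - ∑ j, ‖f₂ j w‖ ^ 2)
          = 1 - ‖w‖ ^ 2)
    ↔ ∃ U : Matrix (Fin (n + 1)) (Fin (n + 1)) ℂ,
        U ∈ Matrix.unitaryGroup (Fin (n + 1)) ℂ ∧
        ∀ w ∈ Metric.ball (0 : ℂ) 1,
          U.mulVec (Fin.cons (f₁ w) (fun j => f₂ j w))
            = Fin.cons w (fun j => f₁ w * f₂ j w)) :=
  isometry_iff_unitary_general n f₁ f₂ hol₁ hol₂ hmap₁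
end

section
/- For each integer N ≥ 2 there exist ε > 0 and a holomorphic map f = (f₁, …, f_N) : {z ∈ ℂ : |z| < 1 + ε} → ℂ^N such that ∑_{k=1}^N |f_k(z)|² < 1 for |z| < 1 and ∑_{k=1}^N |f_k(z)|² = 1 for |z| = 1 (so f restricts to a proper holomorphic map from Δ to 𝔹^N extending holomorphically to a neighborhood of the closed unit disk), every component f_k is algebraic (there is a nonzero polynomial P_k ∈ ℂ[X, Y] with P_k(z, f_k(z)) = 0 on Δ), and f is not rational: at least one component f_k is not a rational function on Δ. -/
/-!
Let `σ = branch` be the branch near `t = 1` of the algebraic function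
`1000 σ² (σ - 1) = z (100 σ - 1)`. For `‖z‖ ≤ 21/20` it is the fixed point of the contraction
`t ↦ 1 + z (100 t - 1) / (1000 t²)` of the disk `‖t - 1‖ ≤ 1/5`, so it is holomorphic on
`‖z‖ < 21/20` as a uniform limit of iterates. The map is `f = (φ₁ ∘ σ, φ₂ ∘ σ, 0, …, 0)` with
`φ₁ t = (100 t - 1) / (c t²)`, `φ₂ t = -10 (100 t - 1) / (c t)` and `c = scale = √990000`.
Taking norms in the defining relation gives
`(1 - ‖f‖²) · 990000 ‖σ‖⁴ (100 ‖σ‖² - 1) = ‖100 σ - 1‖² (1 - ‖z‖²)`, so `‖f‖ < 1` inside the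
unit disk and `‖f‖ = 1` on the circle. Both components are algebraic because
`σ = 1 + c z f₁ / 1000` and `σ (c f₂ + 1000) = 10`. If `f₁` were rational, so would be `σ`;
writing `σ = p / q` in lowest terms, `q` divides `1000 p³`, hence is constant, and then comparing
degrees gives `3 deg p = deg p + 1`.
-/

open Filter Metric Set Topology Function
open scoped NNReal

theorem Set.MapsTo.exists_isFixedPt_tendsto_iterate {α : Type*} [MetricSpace α] {f : α → α}
    {s : Set α} {K : ℝ≥0} {a : α} (hs : IsComplete s) (hf : MapsTo f s s)
    (hlip : LipschitzOnWith K f s) (hK : K < 1) (ha : a ∈ s) :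
    ∃ x ∈ s, IsFixedPt f x ∧ Tendsto (fun n ↦ f^[n] a) atTop (𝓝 x) ∧
      ∀ n, dist (f^[n] a) x ≤ dist a (f a) * K ^ n / (1 - K) := by
  have := hs.completeSpace_coe
  have : Nonempty s := ⟨⟨a, ha⟩⟩
  have hc : ContractingWith K (hf.restrict f s s) := ⟨hK, hlip.mapsToRestrict hf⟩
  have hiter (n : ℕ) : ((hf.restrict f s s)^[n] ⟨a, ha⟩ : α) = f^[n] a := by
    simp [coe_iterate_restrict]
  refine ⟨_, (hc.fixedPoint _).2, ?_, ?_, fun n ↦ ?_⟩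
  · exact congrArg Subtype.val hc.fixedPoint_isFixedPt
  · rw [← funext hiter]
    exact (continuous_subtype_val.tendsto _).comp (hc.tendsto_iterate_fixedPoint ⟨a, ha⟩)
  · rw [← hiter, ← Subtype.dist_eq]
    exact hc.apriori_dist_iterate_fixedPoint_le ⟨a, ha⟩ n

section IterateLimit

variable {F : Type*} [NormedAddCommGroup F] {g : ℂ → F → F} {U : Set ℂ} {s : Set F} {K : ℝ≥0}
  {a : F} {z : ℂ}

noncomputable def iterateLimit (g : ℂ → F → F) (a : F) (z : ℂ) : F :=
  limUnder atTop fun n ↦ (g z)^[n] a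

theorem iterateLimit_spec (hs : IsComplete s) (hK : K < 1) (ha : a ∈ s) (hf : MapsTo (g z) s s)
    (hlip : LipschitzOnWith K (g z) s) :
    iterateLimit g a z ∈ s ∧ IsFixedPt (g z) (iterateLimit g a z) ∧
      ∀ n, dist ((g z)^[n] a) (iterateLimit g a z) ≤ dist a (g z a) * K ^ n / (1 - K) := by
  obtain ⟨x, hxs, hfix, hlim, hdist⟩ := hf.exists_isFixedPt_tendsto_iterate hs hlip hK ha
  rw [iterateLimit, hlim.limUnder_eq]
  exact ⟨hxs, hfix, hdist⟩

theorem tendstoUniformlyOn_iterate_iterateLimit (hs : IsComplete s) (hbdd : Bornology.IsBounded s)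
    (hK : K < 1) (ha : a ∈ s) (hf : ∀ z ∈ U, MapsTo (g z) s s)
    (hlip : ∀ z ∈ U, LipschitzOnWith K (g z) s) :
    TendstoUniformlyOn (fun n z ↦ (g z)^[n] a) (iterateLimit g a) atTop U := by
  have hbound : Tendsto (fun n : ℕ ↦ diam s * (K : ℝ) ^ n / (1 - K)) atTop (𝓝 0) := by
    simpa using ((tendsto_pow_atTop_nhds_zero_of_lt_one K.2 hK).const_mul (diam s)).div_const
      (1 - (K : ℝ))
  rw [Metric.tendstoUniformlyOn_iff]
  intro ε hε
  filter_upwards [hbound.eventually (gt_mem_nhds hε)] with n hn z hz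
  calc dist (iterateLimit g a z) ((g z)^[n] a)
      ≤ dist a (g z a) * K ^ n / (1 - K) := by
        rw [dist_comm]; exact (iterateLimit_spec hs hK ha (hf z hz) (hlip z hz)).2.2 n
    _ ≤ diam s * K ^ n / (1 - K) := by
        have : (0 : ℝ) < 1 - K := sub_pos.2 hK
        gcongr; exact dist_le_diam_of_mem hbdd ha (hf z hz ha)
    _ < ε := hn

theorem differentiableOn_iterateLimit [NormedSpace ℂ F] [CompleteSpace F] (hU : IsOpen U)
    (hs : IsComplete s) (hbdd : Bornology.IsBounded s) (hK : K < 1) (ha : a ∈ s)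
    (hf : ∀ z ∈ U, MapsTo (g z) s s)
    (hlip : ∀ z ∈ U, LipschitzOnWith K (g z) s)
    (hg : DifferentiableOn ℂ (fun p : ℂ × F ↦ g p.1 p.2) (U ×ˢ s)) :
    DifferentiableOn ℂ (iterateLimit g a) U := by
  have hiter (n : ℕ) : DifferentiableOn ℂ (fun z ↦ (g z)^[n] a) U := by
    induction n with
    | zero => exact differentiableOn_const a
    | succ n ih =>
      simp only [iterate_succ_apply']
      exact hg.comp (differentiableOn_id.prodMk ih) fun z hz ↦ ⟨hz, (hf z hz).iterate n ha⟩
  exact (tendstoUniformlyOn_iterate_iterateLimit hs hbdd hK ha hf hlip).tendstoLocallyUniformlyOn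
    |>.differentiableOn (Eventually.of_forall hiter) hU

end IterateLimit

section RationalFunctions

open Polynomial

def IsAlgebraicOn (f : ℂ → ℂ) (s : Set ℂ) : Prop :=
  ∃ P : MvPolynomial (Fin 2) ℂ, P ≠ 0 ∧ ∀ z ∈ s, MvPolynomial.eval ![z, f z] P = 0

def IsRationalOn (f : ℂ → ℂ) (s : Set ℂ) : Prop :=
  ∃ P Q : ℂ[X], (∀ z ∈ s, Q.eval z ≠ 0) ∧ ∀ z ∈ s, f z = P.eval z / Q.eval z

theorem isAlgebraicOn_zero (s : Set ℂ) : IsAlgebraicOn 0 s :=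
  ⟨MvPolynomial.X 1, MvPolynomial.X_ne_zero 1, fun z _ ↦ by simp⟩

theorem IsRationalOn.congr {f g : ℂ → ℂ} {s : Set ℂ} (h : IsRationalOn f s) (hfg : s.EqOn f g) :
    IsRationalOn g s :=
  h.imp fun _ ↦ .imp fun _ hPQ ↦ ⟨hPQ.1, fun z hz ↦ hfg hz ▸ hPQ.2 z hz⟩

theorem IsRationalOn.const_add_mul_id_mul {f : ℂ → ℂ} {s : Set ℂ} (h : IsRationalOn f s)
    (a b : ℂ) :
    IsRationalOn (fun z ↦ a + b * z * f z) s := by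
  obtain ⟨P, Q, hQ, hf⟩ := h
  refine ⟨C a * Q + C b * X * P, Q, hQ, fun z hz ↦ ?_⟩
  simp only [hf z hz, eval_add, eval_mul, eval_C, eval_X]
  field_simp [hQ z hz]

theorem cubic_relation_ne_of_isRelPrime {p q : ℂ[X]} (hpq : IsRelPrime q p) (hq : q ≠ 0) :
    C 1000 * p ^ 2 * (p - q) ≠ X * (C 100 * p - q) * q ^ 2 := by
  intro h
  have hdvd : q ∣ C 1000 * p ^ 3 :=
    ⟨C 1000 * p ^ 2 + X * (C 100 * p - q) * q, by linear_combination h⟩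
  have hunit : IsUnit q := isUnit_of_dvd_unit ((hpq.pow_right (n := 3)).dvd_of_dvd_mul_right hdvd)
    (isUnit_C.2 (by norm_num))
  obtain ⟨c, hc, rfl⟩ := Polynomial.isUnit_iff.1 hunit
  rcases Nat.eq_zero_or_pos p.natDegree with hp | hp
  · rw [eq_C_of_natDegree_eq_zero hp] at h
    have h0 := congrArg (Polynomial.eval 0) h
    have h1 := congrArg (Polynomial.eval 1) h
    simp only [eval_mul, eval_C, eval_pow, eval_sub, eval_X, zero_mul, one_mul, mul_eq_zero,
      OfNat.ofNat_ne_zero, pow_eq_zero_iff, ne_eq, not_false_eq_true, false_or] at h0 h1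
    rcases h0 with ha | ha
    · simp [ha, hc.ne_zero] at h1
    · simp [sub_eq_zero.1 ha, hc.ne_zero] at h1
      exact hc.ne_zero (by linear_combination h1 / 99)
  · have hp0 : p ≠ 0 := ne_zero_of_natDegree_gt hp
    have hc0 : C c ≠ 0 := C_ne_zero.2 hc.ne_zero
    have hsub : (p - C c).natDegree = p.natDegree := natDegree_sub_C
    have hsub' : (C 100 * p - C c).natDegree = p.natDegree := by
      rw [natDegree_sub_C, natDegree_C_mul (by norm_num)]
    have hsub0 : p - C c ≠ 0 := ne_zero_of_natDegree_gt (hsub ▸ hp)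
    have hsub0' : C 100 * p - C c ≠ 0 := ne_zero_of_natDegree_gt (hsub' ▸ hp)
    have := congrArg natDegree h
    rw [natDegree_mul (by simp [hp0]) hsub0, natDegree_mul (by simp) (by simp [hp0]),
      natDegree_mul (mul_ne_zero X_ne_zero hsub0') (by simp [hc0]), natDegree_mul X_ne_zero hsub0',
      hsub, hsub', natDegree_pow, natDegree_pow, natDegree_C, natDegree_C, natDegree_X] at this
    omega

theorem cubic_relation_ne (p q : ℂ[X]) (hq : q ≠ 0) :
    C 1000 * p ^ 2 * (p - q) ≠ X * (C 100 * p - q) * q ^ 2 := by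
  intro h
  obtain ⟨q', p', d, hrel, rfl, rfl⟩ := UniqueFactorizationMonoid.exists_reduced_factors q hq p
  have hd : d ≠ 0 := left_ne_zero_of_mul hq
  refine cubic_relation_ne_of_isRelPrime hrel (right_ne_zero_of_mul hq)
    (mul_left_cancel₀ (pow_ne_zero 3 hd) ?_)
  linear_combination h

theorem not_isRationalOn_of_cubic {u : ℂ → ℂ} {s : Set ℂ} (hs : s.Infinite)
    (hu : ∀ z ∈ s, 1000 * u z ^ 2 * (u z - 1) = z * (100 * u z - 1)) : ¬ IsRationalOn u s := by
  rintro ⟨p, q, hq, hpq⟩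
  obtain ⟨z₀, hz₀⟩ := hs.nonempty
  have hq0 : q ≠ 0 := fun h ↦ hq z₀ hz₀ (by simp [h])
  refine cubic_relation_ne p q hq0 (sub_eq_zero.1 (eq_zero_of_infinite_isRoot _
    (hs.mono fun z hz ↦ ?_)))
  have hrel := hu z hz
  rw [hpq z hz] at hrel
  field_simp [hq z hz] at hrel
  simp only [Set.mem_ofPred_eq, IsRoot, eval_sub, eval_mul, eval_pow, eval_C, eval_X]
  linear_combination hrel

end RationalFunctions

noncomputable section

namespace AlgebraicProperMap

def step (z t : ℂ) : ℂ := 1 + z * (100 * t - 1) / (1000 * t ^ 2)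

theorem norm_bounds_of_mem_closedBall {t : ℂ} (ht : t ∈ closedBall (1 : ℂ) (1 / 5)) :
    4 / 5 ≤ ‖t‖ ∧ ‖t‖ ≤ 6 / 5 := by
  rw [mem_closedBall, dist_eq_norm] at ht
  have := abs_le.1 ((abs_norm_sub_norm_le t 1).trans ht)
  rw [norm_one] at this
  constructor <;> linarith [this.1, this.2]

theorem ne_zero_of_mem_closedBall {t : ℂ} (ht : t ∈ closedBall (1 : ℂ) (1 / 5)) : t ≠ 0 :=
  norm_pos_iff.1 (by linarith [(norm_bounds_of_mem_closedBall ht).1])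

theorem mapsTo_step {z : ℂ} (hz : ‖z‖ ≤ 21 / 20) :
    MapsTo (step z) (closedBall 1 (1 / 5)) (closedBall 1 (1 / 5)) := by
  intro t ht
  obtain ⟨ht₁, ht₂⟩ := norm_bounds_of_mem_closedBall ht
  have hnum : ‖z * (100 * t - 1)‖ ≤ 21 / 20 * 121 := by
    rw [norm_mul]
    gcongr
    calc ‖100 * t - 1‖ ≤ 100 * ‖t‖ + 1 := by simpa using norm_sub_le (100 * t) 1
      _ ≤ 121 := by linarith
  have hden : 640 ≤ ‖1000 * t ^ 2‖ := by
    rw [norm_mul, norm_pow, Complex.norm_ofNat]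
    nlinarith
  rw [mem_closedBall, dist_eq_norm, step, add_sub_cancel_left, norm_div]
  calc _ ≤ 21 / 20 * 121 / 640 := div_le_div₀ (by norm_num) hnum (by norm_num) hden
    _ ≤ 1 / 5 := by norm_num

theorem step_sub_step (z t t' : ℂ) (ht : t ≠ 0) (ht' : t' ≠ 0) :
    step z t - step z t' = z * (t' - t) * (100 * t * t' - t - t') / (1000 * t ^ 2 * t' ^ 2) := by
  unfold step
  field_simp
  ring

theorem lipschitzOnWith_step {z : ℂ} (hz : ‖z‖ ≤ 21 / 20) :
    LipschitzOnWith (2 / 5) (step z) (closedBall 1 (1 / 5)) := by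
  refine LipschitzOnWith.of_dist_le_mul fun t ht t' ht' ↦ ?_
  obtain ⟨ht₁, ht₂⟩ := norm_bounds_of_mem_closedBall ht
  obtain ⟨ht'₁, ht'₂⟩ := norm_bounds_of_mem_closedBall ht'
  have hnum : ‖z * (t' - t) * (100 * t * t' - t - t')‖ ≤ 21 / 20 * (732 / 5) * ‖t - t'‖ := by
    rw [norm_mul, norm_mul, norm_sub_rev t']
    have : ‖100 * t * t' - t - t'‖ ≤ 732 / 5 :=
      calc ‖100 * t * t' - t - t'‖ ≤ 100 * ‖t‖ * ‖t'‖ + ‖t‖ + ‖t'‖ := by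
            have := norm_sub_le (100 * t * t' - t) t'
            have := norm_sub_le (100 * t * t') t
            simp only [norm_mul, Complex.norm_ofNat] at *
            linarith
        _ ≤ 732 / 5 := by nlinarith
    calc ‖z‖ * ‖t - t'‖ * ‖100 * t * t' - t - t'‖ ≤ 21 / 20 * ‖t - t'‖ * (732 / 5) := by gcongr
      _ = _ := by ring
  have hden : 2048 / 5 ≤ ‖1000 * t ^ 2 * t' ^ 2‖ := by
    rw [norm_mul, norm_mul, norm_pow, norm_pow, Complex.norm_ofNat]
    have : (16 / 25 : ℝ) ≤ ‖t‖ ^ 2 := by nlinarith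
    have : (16 / 25 : ℝ) ≤ ‖t'‖ ^ 2 := by nlinarith
    nlinarith
  rw [dist_eq_norm, dist_eq_norm,
    step_sub_step z t t' (ne_zero_of_mem_closedBall ht) (ne_zero_of_mem_closedBall ht'), norm_div]
  calc _ ≤ 21 / 20 * (732 / 5) * ‖t - t'‖ / (2048 / 5) :=
        div_le_div₀ (by positivity) hnum (by norm_num) hden
    _ ≤ ((2 / 5 : ℝ≥0) : ℝ) * ‖t - t'‖ := by
        push_cast
        nlinarith [norm_nonneg (t - t')]

theorem differentiableOn_step :
    DifferentiableOn ℂ (fun p : ℂ × ℂ ↦ step p.1 p.2) (univ ×ˢ closedBall 1 (1 / 5)) := by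
  have hden : ∀ p ∈ (univ : Set ℂ) ×ˢ closedBall (1 : ℂ) (1 / 5), 1000 * p.2 ^ 2 ≠ 0 := by
    rintro ⟨z, t⟩ ⟨-, ht⟩
    simpa using ne_zero_of_mem_closedBall ht
  simp only [step, div_eq_mul_inv]
  fun_prop (disch := exact hden)

def branch : ℂ → ℂ := iterateLimit step 1

theorem branch_spec {z : ℂ} (hz : ‖z‖ ≤ 21 / 20) :
    branch z ∈ closedBall 1 (1 / 5) ∧ IsFixedPt (step z) (branch z) :=
  have h := iterateLimit_spec isClosed_closedBall.isComplete (by norm_num)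
    (mem_closedBall_self (by norm_num)) (mapsTo_step hz) (lipschitzOnWith_step hz)
  ⟨h.1, h.2.1⟩

theorem branch_ne_zero {z : ℂ} (hz : ‖z‖ ≤ 21 / 20) : branch z ≠ 0 :=
  ne_zero_of_mem_closedBall (branch_spec hz).1

theorem branch_cubic {z : ℂ} (hz : ‖z‖ ≤ 21 / 20) :
    1000 * branch z ^ 2 * (branch z - 1) = z * (100 * branch z - 1) := by
  have h0 := branch_ne_zero hz
  have : step z (branch z) = branch z := (branch_spec hz).2
  unfold step at this
  field_simp at this
  linear_combination -this

theorem differentiableOn_branch : DifferentiableOn ℂ branch (ball 0 (21 / 20)) :=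
  differentiableOn_iterateLimit isOpen_ball isClosed_closedBall.isComplete isBounded_closedBall
    (by norm_num) (mem_closedBall_self (by norm_num))
    (fun z hz ↦ mapsTo_step (mem_ball_zero_iff.1 hz).le)
    (fun z hz ↦ lipschitzOnWith_step (mem_ball_zero_iff.1 hz).le)
    (differentiableOn_step.mono (prod_mono (subset_univ _) le_rfl))

def scale : ℝ := √990000

theorem scale_sq : scale ^ 2 = 990000 := Real.sq_sqrt (by norm_num)

theorem scale_pos : 0 < scale := Real.sqrt_pos.2 (by norm_num)

theorem scale_ne_zero : (scale : ℂ) ≠ 0 := Complex.ofReal_ne_zero.2 scale_pos.ne'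

def φ₁ (t : ℂ) : ℂ := (100 * t - 1) / (scale * t ^ 2)

def φ₂ (t : ℂ) : ℂ := -10 * (100 * t - 1) / (scale * t)

theorem norm_sq_hundred_mul_sub_one (t : ℂ) :
    ‖100 * t - 1‖ ^ 2 = 9900 * ‖t‖ ^ 2 - 99 + 100 * ‖t - 1‖ ^ 2 := by
  simp only [Complex.sq_norm, Complex.normSq_apply, Complex.sub_re, Complex.sub_im,
    Complex.mul_re, Complex.mul_im, Complex.one_re, Complex.one_im, Complex.re_ofNat,
    Complex.im_ofNat]
  ring

theorem one_sub_norm_sq_φ_mul {z t : ℂ} (hrel : 1000 * t ^ 2 * (t - 1) = z * (100 * t - 1))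
    (ht : t ≠ 0) :
    (1 - (‖φ₁ t‖ ^ 2 + ‖φ₂ t‖ ^ 2)) * (990000 * ‖t‖ ^ 4 * (100 * ‖t‖ ^ 2 - 1)) =
      ‖100 * t - 1‖ ^ 2 * (1 - ‖z‖ ^ 2) := by
  have hnorm : ‖(scale : ℂ)‖ = scale := by simp [scale_pos.le]
  have ht' : 0 < ‖t‖ := norm_pos_iff.2 ht
  have hrel' : 1000000 * ‖t‖ ^ 4 * ‖t - 1‖ ^ 2 = ‖z‖ ^ 2 * ‖100 * t - 1‖ ^ 2 := by
    have := congrArg (‖·‖ ^ 2) hrel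
    simp only [norm_mul, norm_pow, Complex.norm_ofNat] at this
    linear_combination this
  simp only [φ₁, φ₂, norm_div, norm_mul, norm_pow, norm_neg, Complex.norm_ofNat, hnorm]
  field_simp
  rw [scale_sq]
  linear_combination -10000 * ‖t‖ ^ 4 * norm_sq_hundred_mul_sub_one t - hrel'

theorem factors_pos_of_mem_closedBall {t : ℂ} (ht : t ∈ closedBall 1 (1 / 5)) :
    0 < 990000 * ‖t‖ ^ 4 * (100 * ‖t‖ ^ 2 - 1) ∧ 0 < ‖100 * t - 1‖ := by
  have := (norm_bounds_of_mem_closedBall ht).1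
  refine ⟨mul_pos (by positivity) (by nlinarith), ?_⟩
  calc (0 : ℝ) < 100 * ‖t‖ - ‖(1 : ℂ)‖ := by rw [norm_one]; linarith
    _ ≤ ‖100 * t - 1‖ := by simpa using norm_sub_norm_le (100 * t) 1

theorem norm_sq_φ_add_lt_one {z t : ℂ} (hrel : 1000 * t ^ 2 * (t - 1) = z * (100 * t - 1))
    (ht : t ∈ closedBall 1 (1 / 5)) (hz : ‖z‖ < 1) : ‖φ₁ t‖ ^ 2 + ‖φ₂ t‖ ^ 2 < 1 := by
  obtain ⟨hD, hB⟩ := factors_pos_of_mem_closedBall ht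
  have hpos : 0 < ‖100 * t - 1‖ ^ 2 * (1 - ‖z‖ ^ 2) := by
    have : ‖z‖ ^ 2 < 1 := by nlinarith [norm_nonneg z]
    have : 0 < ‖100 * t - 1‖ ^ 2 := by positivity
    nlinarith
  rw [← one_sub_norm_sq_φ_mul hrel (ne_zero_of_mem_closedBall ht)] at hpos
  linarith [(mul_pos_iff_of_pos_right hD).1 hpos]

theorem norm_sq_φ_add_eq_one {z t : ℂ} (hrel : 1000 * t ^ 2 * (t - 1) = z * (100 * t - 1))
    (ht : t ∈ closedBall 1 (1 / 5)) (hz : ‖z‖ = 1) : ‖φ₁ t‖ ^ 2 + ‖φ₂ t‖ ^ 2 = 1 := by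
  have h := one_sub_norm_sq_φ_mul hrel (ne_zero_of_mem_closedBall ht)
  rw [hz, one_pow, sub_self, mul_zero] at h
  linarith [(mul_eq_zero.1 h).resolve_right (factors_pos_of_mem_closedBall ht).1.ne']

theorem sub_one_eq_φ₁ {z t : ℂ} (hrel : 1000 * t ^ 2 * (t - 1) = z * (100 * t - 1))
    (ht : t ≠ 0) : 1000 * (t - 1) = scale * z * φ₁ t := by
  have := scale_ne_zero
  unfold φ₁
  field_simp
  linear_combination hrel

open MvPolynomial in
theorem isAlgebraicOn_φ₁_comp_branch : IsAlgebraicOn (φ₁ ∘ branch) (ball 0 (21 / 20)) := by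
  -- `10⁶ (c w σ² - 100 σ + 1)` with `1000 σ` replaced by `1000 + c z w`
  refine ⟨C (scale : ℂ) * X 1 * (C 1000 + C (scale : ℂ) * X 0 * X 1) ^ 2
    - C 100000 * (C 1000 + C (scale : ℂ) * X 0 * X 1) + C 1000000, fun h ↦ ?_, fun z hz ↦ ?_⟩
  · have := congrArg (MvPolynomial.eval ![0, 0]) h
    norm_num at this
  · have hz' := (mem_ball_zero_iff.1 hz).le
    have ht := branch_ne_zero hz'
    have h₁ := sub_one_eq_φ₁ (branch_cubic hz') ht
    have h₂ : scale * φ₁ (branch z) * branch z ^ 2 = 100 * branch z - 1 := by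
      have := scale_ne_zero
      unfold φ₁
      field_simp
    simp only [comp_apply, map_add, map_sub, map_mul, map_pow, eval_C, eval_X,
      Matrix.cons_val_zero, Matrix.cons_val_one]
    set w := φ₁ (branch z)
    set t := branch z
    linear_combination
      1000000 * h₂ - (scale * w * (2000 * t + scale * z * w - 1000 * (t - 1)) - 100000) * h₁

theorem mul_φ₂_eq {t : ℂ} (ht : t ≠ 0) : t * (scale * φ₂ t + 1000) = 10 := by
  have := scale_ne_zero
  unfold φ₂
  field_simp
  ring

open MvPolynomial in
theorem isAlgebraicOn_φ₂_comp_branch : IsAlgebraicOn (φ₂ ∘ branch) (ball 0 (21 / 20)) := by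
  -- the cubic relation with `σ = 10 / (c w + 1000)` substituted, denominators cleared
  refine ⟨C (scale : ℂ) * X 0 * X 1 * (C (scale : ℂ) * X 1 + C 1000) ^ 2
    - C 100000 * (C (scale : ℂ) * X 1 + C 990), fun h ↦ ?_, fun z hz ↦ ?_⟩
  · have := congrArg (MvPolynomial.eval ![0, 0]) h
    norm_num at this
  · have hz' := (mem_ball_zero_iff.1 hz).le
    have ht := branch_ne_zero hz'
    have hrel := branch_cubic hz'
    simp only [comp_apply, map_add, map_sub, map_mul, map_pow, eval_C, eval_X,
      Matrix.cons_val_zero, Matrix.cons_val_one]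
    set w := φ₂ (branch z)
    set t := branch z
    have h₁ : t * (scale * w + 1000) = 10 := mul_φ₂_eq ht
    have h₂ : scale * z * w = 10000 * t * (1 - t) :=
      mul_left_cancel₀ ht (by linear_combination z * h₁ + 10 * hrel)
    refine (mul_eq_zero.1 (?_ : t ^ 2 * _ = 0)).resolve_left (pow_ne_zero 2 ht)
    linear_combination (scale * z * w * (t * (scale * w + 1000) + 10) - 100000 * t) * h₁ + 100 * h₂

theorem not_isRationalOn_φ₁_comp_branch : ¬ IsRationalOn (φ₁ ∘ branch) (ball 0 1) := by
  have hnorm {z : ℂ} (hz : z ∈ ball (0 : ℂ) 1) : ‖z‖ ≤ 21 / 20 :=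
    (mem_ball_zero_iff.1 hz).le.trans (by norm_num)
  refine fun h ↦ not_isRationalOn_of_cubic (infinite_of_mem_nhds 0 (ball_mem_nhds 0 one_pos))
    (fun z hz ↦ branch_cubic (hnorm hz))
    ((h.const_add_mul_id_mul 1 (scale / 1000)).congr fun z hz ↦ ?_)
  have := sub_one_eq_φ₁ (branch_cubic (hnorm hz)) (branch_ne_zero (hnorm hz))
  simp only [comp_apply]
  linear_combination -this / 1000

theorem differentiableOn_comp_branch {φ : ℂ → ℂ} (hφ : ∀ t ≠ 0, DifferentiableAt ℂ φ t) :
    DifferentiableOn ℂ (φ ∘ branch) (ball 0 (21 / 20)) := fun z hz ↦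
  (hφ _ (branch_ne_zero (mem_ball_zero_iff.1 hz).le)).comp_differentiableWithinAt z
    (differentiableOn_branch z hz)

theorem differentiableAt_φ₁ {t : ℂ} (ht : t ≠ 0) : DifferentiableAt ℂ φ₁ t := by
  have := scale_ne_zero
  unfold φ₁
  fun_prop (disch := simp [*])

theorem differentiableAt_φ₂ {t : ℂ} (ht : t ≠ 0) : DifferentiableAt ℂ φ₂ t := by
  have := scale_ne_zero
  unfold φ₂
  fun_prop (disch := simp [*])

def properMap (n : ℕ) : Fin (n + 2) → ℂ → ℂ :=
  Matrix.vecCons (φ₁ ∘ branch) (Matrix.vecCons (φ₂ ∘ branch) 0)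

theorem properMap_apply_mem (n : ℕ) (k : Fin (n + 2)) :
    properMap n k ∈ ({φ₁ ∘ branch, φ₂ ∘ branch, 0} : Set (ℂ → ℂ)) := by
  refine Fin.cases ?_ (fun j ↦ Fin.cases ?_ (fun i ↦ ?_) j) k <;> simp [properMap]

theorem sum_norm_sq_properMap (n : ℕ) (z : ℂ) :
    ∑ k, ‖properMap n k z‖ ^ 2 = ‖φ₁ (branch z)‖ ^ 2 + ‖φ₂ (branch z)‖ ^ 2 := by
  simp [properMap, Fin.sum_univ_succ]

theorem differentiableOn_properMap (n : ℕ) (k : Fin (n + 2)) :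
    DifferentiableOn ℂ (properMap n k) (ball 0 (21 / 20)) := by
  rcases properMap_apply_mem n k with h | h | h <;> rw [h]
  exacts [differentiableOn_comp_branch fun _ ↦ differentiableAt_φ₁,
    differentiableOn_comp_branch fun _ ↦ differentiableAt_φ₂, differentiableOn_const 0]

theorem isAlgebraicOn_properMap (n : ℕ) (k : Fin (n + 2)) :
    IsAlgebraicOn (properMap n k) (ball 0 (21 / 20)) := by
  rcases properMap_apply_mem n k with h | h | h <;> rw [h]
  exacts [isAlgebraicOn_φ₁_comp_branch, isAlgebraicOn_φ₂_comp_branch, isAlgebraicOn_zero _]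

end AlgebraicProperMap

end

open AlgebraicProperMap

/-- For every `N ≥ 2` there is an algebraic but non-rational proper holomorphic map from
the unit disk to `𝔹^N` extending holomorphically to a neighborhood of the closed unit
disk. -/
theorem exists_algebraic_irrational_proper_map (N : ℕ) (hN : 2 ≤ N) :
    ∃ (ε : ℝ) (f : Fin N → ℂ → ℂ), 0 < ε ∧
      (∀ k, DifferentiableOn ℂ (f k) (Metric.ball 0 (1 + ε))) ∧
      (∀ z : ℂ, ‖z‖ < 1 → ∑ k, ‖f k z‖ ^ 2 < 1) ∧
      (∀ z : ℂ, ‖z‖ = 1 → ∑ k, ‖f k z‖ ^ 2 = 1) ∧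
      (∀ k : Fin N, ∃ P : MvPolynomial (Fin 2) ℂ, P ≠ 0 ∧
        ∀ z : ℂ, ‖z‖ < 1 → MvPolynomial.eval ![z, f k z] P = 0) ∧
      ∃ k : Fin N, ¬ ∃ P Q : Polynomial ℂ,
        (∀ z ∈ Metric.ball (0 : ℂ) 1, Q.eval z ≠ 0) ∧
        ∀ z ∈ Metric.ball (0 : ℂ) 1, f k z = P.eval z / Q.eval z := by
  obtain ⟨n, rfl⟩ := Nat.exists_eq_add_of_le' hN
  refine ⟨1 / 20, properMap n, by norm_num, fun k ↦ ?_, fun z hz ↦ ?_, fun z hz ↦ ?_,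
    fun k ↦ ?_, 0, not_isRationalOn_φ₁_comp_branch⟩
  · exact (show (1 : ℝ) + 1 / 20 = 21 / 20 by norm_num) ▸ differentiableOn_properMap n k
  · have hz' : ‖z‖ ≤ 21 / 20 := by linarith
    rw [sum_norm_sq_properMap]
    exact norm_sq_φ_add_lt_one (branch_cubic hz') (branch_spec hz').1 hz
  · have hz' : ‖z‖ ≤ 21 / 20 := by linarith
    rw [sum_norm_sq_properMap]
    exact norm_sq_φ_add_eq_one (branch_cubic hz') (branch_spec hz').1 hz
  · obtain ⟨P, hP, hPz⟩ := isAlgebraicOn_properMap n k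
    exact ⟨P, hP, fun z hz ↦ hPz z (mem_ball_zero_iff.2 (by linarith))⟩
end

section
/- Let k ≥ 2 be an integer and λ > 0 a real constant. Then there is no holomorphic function f : Δ → Δ such that (1 − |z|^{2k}) · (1 − |f(z)|²)^{λ} = 1 − |z|² for all z ∈ Δ. -/
/-!
With `t = ‖z‖²` the identity reads `‖f z‖² = 1 - ((1 - t) / (1 - t ^ k)) ^ λ⁻¹`. Hence `f 0 = 0`,
`‖f' 0‖² = λ⁻¹` (the derivative of the right side at `t = 0`), `f` has no other zeros and `‖f‖` is
radial. So `f z / z` is holomorphic, zero-free and of radial modulus; the maximum principle for it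
and for its inverse on discs makes it constant, i.e. `f z = a z` with `‖a‖² = λ⁻¹`. The identity
becomes `(1 - t ^ k) (1 - t / λ) ^ λ = 1 - t` near `0`. Differentiating and dividing by `t` gives
`k t ^ (k - 2) (1 - t / λ) (1 - t) = (1 - λ⁻¹) (1 - t ^ k)`, whose value at `t = 0` rules out
`k = 2` and forces `λ = 1` for `k ≥ 3`, where the identity plainly fails.
-/

open Complex Metric Set Filter Topology

section RadialModulus

variable {g : ℂ → ℂ} {R : ℝ}

theorem norm_eq_norm_zero_of_norm_radial (hg : DifferentiableOn ℂ g (ball 0 R))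
    (hne : ∀ z ∈ ball (0 : ℂ) R, g z ≠ 0)
    (hrad : ∀ z ∈ ball (0 : ℂ) R, ∀ w ∈ ball (0 : ℂ) R, ‖z‖ = ‖w‖ → ‖g z‖ = ‖g w‖)
    {z : ℂ} (hz : z ∈ ball (0 : ℂ) R) : ‖g z‖ = ‖g 0‖ := by
  rcases eq_or_ne z 0 with rfl | hz0
  · rfl
  have hr : ‖z‖ ≠ 0 := norm_ne_zero_iff.2 hz0
  have hsub : closedBall (0 : ℂ) ‖z‖ ⊆ ball 0 R := closedBall_subset_ball (mem_ball_zero_iff.1 hz)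
  have hsphere : ∀ {x}, x ∈ frontier (ball (0 : ℂ) ‖z‖) → x ∈ ball (0 : ℂ) R ∧ ‖x‖ = ‖z‖ :=
    fun hx => by
      rw [frontier_ball 0 hr, mem_sphere_zero_iff_norm] at hx
      exact ⟨hsub (mem_closedBall_zero_iff.2 hx.le), hx⟩
  obtain ⟨x, hx, hmax⟩ := exists_mem_frontier_isMaxOn_norm isBounded_ball ⟨0, mem_ball_self
    (norm_pos_iff.2 hz0)⟩ (hg.diffContOnCl_ball hsub)
  obtain ⟨y, hy, hmin⟩ := exists_mem_frontier_isMaxOn_norm isBounded_ball ⟨0, mem_ball_self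
    (norm_pos_iff.2 hz0)⟩ ((hg.inv hne).diffContOnCl_ball hsub)
  rw [closure_ball 0 hr] at hmax hmin
  have hxy : ‖g x‖ = ‖g y‖ :=
    hrad x (hsphere hx).1 y (hsphere hy).1 ((hsphere hx).2.trans (hsphere hy).2.symm)
  have hconst : ∀ w ∈ closedBall (0 : ℂ) ‖z‖, ‖g w‖ = ‖g x‖ := fun w hw => by
    have h1 : ‖g w‖ ≤ ‖g x‖ := hmax hw
    have h2 : ‖(g w)⁻¹‖ ≤ ‖(g y)⁻¹‖ := hmin hw
    rw [norm_inv, norm_inv, inv_le_inv₀ (norm_pos_iff.2 (hne w (hsub hw)))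
      (norm_pos_iff.2 (hne y (hsphere hy).1))] at h2
    exact le_antisymm h1 (hxy ▸ h2)
  rw [hconst z (mem_closedBall_zero_iff.2 le_rfl), hconst 0 (mem_closedBall_self (norm_nonneg z))]

theorem eqOn_const_of_norm_radial (hg : DifferentiableOn ℂ g (ball 0 R))
    (hne : ∀ z ∈ ball (0 : ℂ) R, g z ≠ 0)
    (hrad : ∀ z ∈ ball (0 : ℂ) R, ∀ w ∈ ball (0 : ℂ) R, ‖z‖ = ‖w‖ → ‖g z‖ = ‖g w‖) :
    EqOn g (Function.const ℂ (g 0)) (ball 0 R) := fun _ hz =>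
  eqOn_of_isPreconnected_of_isMaxOn_norm (convex_ball 0 R).isPreconnected isOpen_ball hg
    (mem_ball_self (pos_of_mem_ball hz))
    (fun _ hw => (norm_eq_norm_zero_of_norm_radial hg hne hrad hw).le) hz

end RadialModulus

theorem eq_deriv_mul_of_norm_radial {f : ℂ → ℂ} {R : ℝ} (hf : DifferentiableOn ℂ f (ball 0 R))
    (hf0 : f 0 = 0) (hne : ∀ z ∈ ball (0 : ℂ) R, z ≠ 0 → f z ≠ 0) (hderiv : deriv f 0 ≠ 0)
    (hrad : ∀ z ∈ ball (0 : ℂ) R, ∀ w ∈ ball (0 : ℂ) R, ‖z‖ = ‖w‖ → ‖f z‖ = ‖f w‖) :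
    EqOn f (fun z => deriv f 0 * z) (ball 0 R) := by
  intro z hz
  have hslope : ∀ w ≠ 0, dslope f 0 w = f w / w := fun w hw => by
    rw [dslope_of_ne f hw, slope_def_field, hf0, sub_zero, sub_zero]
  have hg : DifferentiableOn ℂ (dslope f 0) (ball 0 R) :=
    (differentiableOn_dslope (ball_mem_nhds 0 (pos_of_mem_ball hz))).2 hf
  have hgne : ∀ w ∈ ball (0 : ℂ) R, dslope f 0 w ≠ 0 := fun w hw => by
    rcases eq_or_ne w 0 with rfl | hw0
    · rwa [dslope_same]
    · rw [hslope w hw0]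
      exact div_ne_zero (hne w hw hw0) hw0
  have hgrad : ∀ w ∈ ball (0 : ℂ) R, ∀ v ∈ ball (0 : ℂ) R, ‖w‖ = ‖v‖ →
      ‖dslope f 0 w‖ = ‖dslope f 0 v‖ := fun w hw v hv hwv => by
    rcases eq_or_ne w 0 with rfl | hw0
    · rw [norm_zero, eq_comm, norm_eq_zero] at hwv
      rw [hwv]
    have hv0 : v ≠ 0 := norm_ne_zero_iff.1 (hwv ▸ norm_ne_zero_iff.2 hw0)
    rw [hslope w hw0, hslope v hv0, norm_div, norm_div, hrad w hw v hv hwv, hwv]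
  have h := sub_smul_dslope f 0 z
  rw [eqOn_const_of_norm_radial hg hgne hgrad hz, Function.const_apply, dslope_same, hf0,
    sub_zero, sub_zero, smul_eq_mul] at h
  rw [← h, mul_comm]

theorem norm_deriv_sq_eq_of_norm_sq_eq_comp {f : ℂ → ℂ} {φ : ℝ → ℝ} {φ' : ℝ}
    (hf : DifferentiableAt ℂ f 0) (hf0 : f 0 = 0) (hφ : HasDerivAt φ φ' 0)
    (hfφ : ∀ᶠ z in 𝓝 0, ‖f z‖ ^ 2 = φ (‖z‖ ^ 2)) : ‖deriv f 0‖ ^ 2 = φ' := by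
  have hφ0 : φ 0 = 0 := by simpa [hf0, eq_comm] using hfφ.self_of_nhds
  have hlim_f : Tendsto (fun z => ‖slope f 0 z‖ ^ 2) (𝓝[≠] 0) (𝓝 (‖deriv f 0‖ ^ 2)) :=
    ((continuous_norm.pow 2).tendsto _).comp hf.hasDerivAt.tendsto_slope
  have hsq : Tendsto (fun z : ℂ => ‖z‖ ^ 2) (𝓝[≠] 0) (𝓝[≠] 0) :=
    tendsto_nhdsWithin_of_tendsto_nhds_of_eventually_within _
      (((by fun_prop : Continuous fun z : ℂ => ‖z‖ ^ 2).tendsto' 0 0 (by simp)).mono_left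
        nhdsWithin_le_nhds)
      (eventually_nhdsWithin_of_forall fun z hz => by simpa using hz)
  refine tendsto_nhds_unique (hlim_f.congr' ?_) (hφ.tendsto_slope.comp hsq)
  filter_upwards [nhdsWithin_le_nhds hfφ] with z hz
  simp [slope_def_field, hf0, hφ0, ← hz, div_pow]

theorem eq_one_sub_rpow_of_one_sub_pow_mul_rpow_eq {k : ℕ} (hk : k ≠ 0) {t x lam : ℝ}
    (ht0 : 0 ≤ t) (ht1 : t < 1) (hx : x ≤ 1) (hlam : lam ≠ 0)
    (h : (1 - t ^ k) * (1 - x) ^ lam = 1 - t) : x = 1 - ((1 - t) / (1 - t ^ k)) ^ lam⁻¹ := by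
  have htk : t ^ k < 1 := pow_lt_one₀ ht0 ht1 hk
  rw [← h, mul_div_cancel_left₀ _ (sub_pos.2 htk).ne', Real.rpow_rpow_inv (sub_nonneg.2 hx) hlam]
  ring

theorem pow_mul_eq_of_one_sub_pow_mul_rpow_eq {k : ℕ} {lam ε : ℝ} (hlam : 0 < lam) (hε : ε ≤ lam)
    (h : ∀ t ∈ Ioo 0 ε, (1 - t ^ k) * (1 - lam⁻¹ * t) ^ lam = 1 - t) :
    ∀ t ∈ Ioo 0 ε, k * t ^ (k - 1) * (1 - lam⁻¹ * t) * (1 - t) = t * (1 - lam⁻¹) * (1 - t ^ k) := by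
  intro t ht
  have hB : 1 - lam⁻¹ * t ≠ 0 := by
    have : lam⁻¹ * t < 1 := by
      rw [inv_mul_lt_iff₀ hlam, mul_one]; exact ht.2.trans_le hε
    linarith
  set B := 1 - lam⁻¹ * t
  set A := B ^ lam
  have hF : HasDerivAt (fun s : ℝ => (1 - s ^ k) * (1 - lam⁻¹ * s) ^ lam)
      (-(k * t ^ (k - 1)) * A - (1 - t ^ k) * (A * B⁻¹)) t := by
    refine ((hasDerivAt_pow k t).const_sub 1).mul
      ((((hasDerivAt_id' t).const_mul lam⁻¹).const_sub 1).rpow_const (Or.inl hB)) |>.congr_deriv ?_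
    rw [Real.rpow_sub_one hB, div_eq_mul_inv, mul_one, neg_mul, neg_mul, inv_mul_cancel₀ hlam.ne']
    ring
  have hD := hF.unique (((hasDerivAt_id t).const_sub 1).congr_of_eventuallyEq
    (eventually_of_mem (isOpen_Ioo.mem_nhds ht) fun s hs => h s hs))
  -- multiply `hD` by `B (1 - t ^ k)` and eliminate `A` using `h t ht`
  linear_combination (-B * (1 - t ^ k)) * hD - (k * t ^ (k - 1) * B + 1 - t ^ k) * h t ht
    - (1 - t ^ k) ^ 2 * A * mul_inv_cancel₀ hB

theorem not_forall_one_sub_pow_mul_rpow_eq {k : ℕ} (hk : 2 ≤ k) {lam ε : ℝ} (hlam : 0 < lam)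
    (hε : 0 < ε) (hεlam : ε ≤ lam) :
    ¬ ∀ t ∈ Ioo 0 ε, (1 - t ^ k) * (1 - lam⁻¹ * t) ^ lam = 1 - t := by
  intro h
  obtain ⟨m, rfl⟩ : ∃ m, k = m + 2 := ⟨k - 2, by omega⟩
  have hpoly : EqOn (fun t : ℝ => (m + 2 : ℝ) * t ^ m * (1 - lam⁻¹ * t) * (1 - t))
      (fun t => (1 - lam⁻¹) * (1 - t ^ (m + 2))) (Ioo 0 ε) := fun t ht => by
    have := pow_mul_eq_of_one_sub_pow_mul_rpow_eq hlam hεlam h t ht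
    push_cast at this
    apply mul_left_cancel₀ ht.1.ne'
    linear_combination this
  have h0 := hpoly.closure (by fun_prop) (by fun_prop)
    (by rw [closure_Ioo hε.ne]; exact left_mem_Icc.2 hε.le)
  simp only [mul_zero, sub_zero, mul_one, zero_pow (by omega : m + 2 ≠ 0)] at h0
  rcases m with _ | m
  · rw [pow_zero] at h0
    linarith [inv_pos.2 hlam]
  · rw [zero_pow m.succ_ne_zero, mul_zero] at h0
    have hlam1 : lam = 1 := inv_eq_one.1 (by linarith)
    subst hlam1
    have h1 := h (ε / 2) ⟨by linarith, by linarith⟩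
    have : 0 < (ε / 2) ^ (m + 3) * (1 - ε / 2) := by
      apply mul_pos <;> [positivity; linarith]
    rw [inv_one, one_mul, Real.rpow_one] at h1
    nlinarith

theorem hasDerivAt_one_sub_rpow_div {k : ℕ} (hk : 2 ≤ k) (lam : ℝ) :
    HasDerivAt (fun t : ℝ => 1 - ((1 - t) / (1 - t ^ k)) ^ lam⁻¹) lam⁻¹ 0 := by
  have hk0 : (0 : ℝ) ^ k = 0 := zero_pow (by omega)
  have hq : HasDerivAt (fun t : ℝ => (1 - t) / (1 - t ^ k)) (-1) 0 :=
    (((hasDerivAt_id' 0).const_sub 1).div ((hasDerivAt_pow k 0).const_sub 1) (by simp [hk0])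
      ).congr_deriv (by simp [hk0, zero_pow (by omega : k - 1 ≠ 0)])
  exact ((hq.rpow_const (by simp [hk0])).const_sub 1).congr_deriv (by simp [hk0])

/-- Non-existence: for `k ≥ 2` and `λ > 0` there is no holomorphic map `f : Δ → Δ` with
`(1 - |z|^{2k}) (1 - |f(z)|²)^λ = 1 - |z|²` on `Δ`. -/
theorem no_power_factor_isometry (k : ℕ) (hk : 2 ≤ k) (lam : ℝ) (hlam : 0 < lam) :
    ¬ ∃ f : ℂ → ℂ,
      DifferentiableOn ℂ f (Metric.ball 0 1) ∧
      (∀ z ∈ Metric.ball (0 : ℂ) 1, ‖f z‖ < 1) ∧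
      ∀ z ∈ Metric.ball (0 : ℂ) 1,
        (1 - ‖z‖ ^ (2 * k)) * (1 - ‖f z‖ ^ 2) ^ lam
          = 1 - ‖z‖ ^ 2 := by
  rintro ⟨f, hf, hf_lt, heq⟩
  have hball : ball (0 : ℂ) 1 ∈ 𝓝 0 := ball_mem_nhds 0 one_pos
  have hφ : ∀ z ∈ ball (0 : ℂ) 1,
      ‖f z‖ ^ 2 = 1 - ((1 - ‖z‖ ^ 2) / (1 - (‖z‖ ^ 2) ^ k)) ^ lam⁻¹ := fun z hz =>
    eq_one_sub_rpow_of_one_sub_pow_mul_rpow_eq (by omega) (sq_nonneg _)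
      (pow_lt_one₀ (norm_nonneg _) (mem_ball_zero_iff.1 hz) two_ne_zero)
      (pow_le_one₀ (norm_nonneg _) (hf_lt z hz).le) hlam.ne' (by rw [← pow_mul]; exact heq z hz)
  have hf0 : f 0 = 0 := by simpa [zero_pow (by omega : k ≠ 0)] using hφ 0 (mem_ball_self one_pos)
  have hderiv : ‖deriv f 0‖ ^ 2 = lam⁻¹ :=
    norm_deriv_sq_eq_of_norm_sq_eq_comp (hf.differentiableAt hball) hf0
      (hasDerivAt_one_sub_rpow_div hk lam) (eventually_of_mem hball hφ)
  have hne : ∀ z ∈ ball (0 : ℂ) 1, z ≠ 0 → f z ≠ 0 := fun z hz hz0 hfz => by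
    have h := heq z hz
    rw [hfz, norm_zero, zero_pow two_ne_zero, sub_zero, Real.one_rpow, mul_one, sub_right_inj] at h
    exact (pow_lt_pow_right_of_lt_one₀ (norm_pos_iff.2 hz0) (mem_ball_zero_iff.1 hz)
      (by omega)).ne h
  have hrad : ∀ z ∈ ball (0 : ℂ) 1, ∀ w ∈ ball (0 : ℂ) 1, ‖z‖ = ‖w‖ → ‖f z‖ = ‖f w‖ :=
    fun z hz w hw hzw =>
      (sq_eq_sq₀ (norm_nonneg _) (norm_nonneg _)).1 (by rw [hφ z hz, hφ w hw, hzw])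
  have hlin := eq_deriv_mul_of_norm_radial hf hf0 hne
    (fun h => hlam.ne (by simpa [h] using hderiv)) hrad
  refine not_forall_one_sub_pow_mul_rpow_eq hk hlam (lt_min one_pos hlam) (min_le_right _ _)
    fun t ht => ?_
  have hz : (√t : ℂ) ∈ ball 0 1 := by
    simpa [abs_of_nonneg (Real.sqrt_nonneg t), Real.sqrt_lt'] using
      ht.2.trans_le (min_le_left _ _)
  have h := heq _ hz
  rwa [hlin hz, norm_mul, mul_pow, hderiv, Complex.norm_of_nonneg (Real.sqrt_nonneg t), pow_mul,
    Real.sq_sqrt ht.1.le] at h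
end
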